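/- arXiv:1802.00862 — 2 statements merged into one kernel-verified Lean document; each statement's English description precedes it below -/
import Mathlib

section
/- Fix α ∈ [0,1] and 1 ≤ k ≤ n−1, let (T_m)_{m≥1} be Ford's alpha growth process, and let 𝐭• = (𝐬,(x_i)_{i∈[k]},(y_B)) ∈ 𝕋_[k]^{•(n−1)} with ℙ(ρ_k^{•(n−1)}(T_{n−1}) = 𝐭•) > 0. Then, conditionally on ρ_k^{•(n−1)}(T_{n−1}) = 𝐭•, the decorated tree ρ_k^{•(n)}(T_n) is obtained from 𝐭• by choosing one edge B of 𝐬 at random, with probability (x_i − α)/(n − 1 − α) if B = {i} is external and (y_B + α)/(n − 1 − α) if B is internal, and increasing the weight of the chosen edge by one. -/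
open scoped Classical

noncomputable section

/-- The label set `[n] = {1, …, n}`. -/
def lbl (n : ℕ) : Finset ℕ := Finset.Icc 1 n

/-- A rooted binary tree with leaves labeled by the finite set `A ⊆ ℕ`,
encoded as the collection of its edges, where each edge is identified with
the set of leaf labels in the subtree above it. -/
def IsLTree (A : Finset ℕ) (t : Finset (Finset ℕ)) : Prop :=
  (∀ B ∈ t, B ⊆ A ∧ B.Nonempty) ∧
  (∀ j ∈ A, ({j} : Finset ℕ) ∈ t) ∧
  (∀ B₁ ∈ t, ∀ B₂ ∈ t, B₁ ∩ B₂ = ∅ ∨ B₁ ⊆ B₂ ∨ B₂ ⊆ B₁) ∧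
  (∀ B ∈ t, B ≠ A → ∃! B', B' ∈ t ∧ B ∩ B' = ∅ ∧ B ∪ B' ∈ t)

/-- The space `𝕋_A` of rooted binary trees with leaves labeled by `A`. -/
def LTree (A : Finset ℕ) : Type := {t : Finset (Finset ℕ) // IsLTree A t}

noncomputable instance fintypeLTree (A : Finset ℕ) : Fintype (LTree A) := by
  have hfin : {t : Finset (Finset ℕ) | IsLTree A t}.Finite := by
    apply Set.Finite.subset (A.powerset.powerset).finite_toSet
    intro t ht
    have h : IsLTree A t := ht
    simp only [Finset.mem_coe, Finset.mem_powerset]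
    intro B hB
    exact Finset.mem_powerset.mpr (h.1 B hB).1
  exact hfin.fintype

/-- Insertion of a new leaf labeled `j` on the edge `S` of the tree `s`. -/
def insertLeaf (s : Finset (Finset ℕ)) (S : Finset ℕ) (j : ℕ) : Finset (Finset ℕ) :=
  (s.filter fun B => B ∩ S = ∅) ∪ (s.filter fun B => B ⊆ S) ∪
    ((s.filter fun B => S ⊆ B).image fun B => B ∪ {j}) ∪ {({j} : Finset ℕ)}

/-- Ford growth weight of an edge: `α` for internal edges, `1 - α` for external edges. -/
def fordWeight (α : ℝ) (B : Finset ℕ) : ℝ := if 2 ≤ B.card then α else 1 - α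

/-- Modified Ford growth weight: the external edge `{1}` gets weight `α` instead of `1 - α`. -/
def fordWeightT (α : ℝ) (B : Finset ℕ) : ℝ :=
  if 2 ≤ B.card ∨ B = ({1} : Finset ℕ) then α else 1 - α

/-- One step of Ford's alpha growth: probability that a tree with `m` leaves `s`
grows into `t` by insertion of the new leaf `m+1` at an edge chosen with probability
proportional to `1-α` (external) or `α` (internal). -/
def growStepF (α : ℝ) (m : ℕ) (s t : Finset (Finset ℕ)) : ℝ :=
  ∑ S ∈ s, if t = insertLeaf s S (m + 1) then
    fordWeight α S / (∑ S' ∈ s, fordWeight α S') else 0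

/-- One step of the modified Ford alpha growth (edge `{1}` has weight `α`). -/
def growStepFT (α : ℝ) (m : ℕ) (s t : Finset (Finset ℕ)) : ℝ :=
  ∑ S ∈ s, if t = insertLeaf s S (m + 1) then
    fordWeightT α S / (∑ S' ∈ s, fordWeightT α S') else 0

/-- `qF α m` is the law `q_{m,α}` of the `m`-th tree of Ford's alpha growth process. -/
def qF (α : ℝ) : (m : ℕ) → LTree (lbl m) → ℝ
  | 0, _ => 1
  | 1, _ => 1
  | 2, _ => 1
  | (m + 3), t => ∑ s : LTree (lbl (m + 2)), qF α (m + 2) s * growStepF α (m + 2) s.1 t.1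

/-- `qFT α m` is the law `q̃_{m,α}` of the `m`-th tree of the modified Ford alpha
growth process in which the external edge `{1}` is chosen with probability
proportional to `α` rather than `1-α`. -/
def qFT (α : ℝ) : (m : ℕ) → LTree (lbl m) → ℝ
  | 0, _ => 1
  | 1, _ => 1
  | 2, _ => 1
  | (m + 3), t => ∑ s : LTree (lbl (m + 2)), qFT α (m + 2) s * growStepFT α (m + 2) s.1 t.1

/-- Mass of `q_{m,α}` at an arbitrary edge collection (zero on non-trees). -/
def qMass (α : ℝ) (m : ℕ) (u : Finset (Finset ℕ)) : ℝ :=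
  if h : IsLTree (lbl m) u then qF α m ⟨u, h⟩ else 0

/-- Mass of `q̃_{m,α}` at an arbitrary edge collection (zero on non-trees). -/
def qMassT (α : ℝ) (m : ℕ) (u : Finset (Finset ℕ)) : ℝ :=
  if h : IsLTree (lbl m) u then qFT α m ⟨u, h⟩ else 0

/-- Mass of the uniform distribution on `𝕋_{[n]}`. -/
def unifMass (n : ℕ) : ℝ := 1 / (Fintype.card (LTree (lbl n)) : ℝ)

/-- Uniform mass at an arbitrary edge collection (zero on non-trees). -/
def unifTreeMass (c : ℕ) (u : Finset (Finset ℕ)) : ℝ :=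
  if IsLTree (lbl c) u then unifMass c else 0

/-- Smallest label in a finite label set (`0` if empty). -/
def minLbl (B : Finset ℕ) : ℕ := if h : B.Nonempty then B.min' h else 0

/-- The sibling edge of `B` in the tree `t`. -/
def sibling (t : Finset (Finset ℕ)) (B : Finset ℕ) : Finset ℕ :=
  if h : ∃ B', B' ∈ t ∧ B ∩ B' = ∅ ∧ B ∪ B' ∈ t then h.choose else ∅

/-- The parent edge of `B` in the tree `t`. -/
def parentEdge (t : Finset (Finset ℕ)) (B : Finset ℕ) : Finset ℕ := B ∪ sibling t B

/-- `ĩ = max {i, a, b}` where `a`, `b` are the smallest leaf labels in the first two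
subtrees on the ancestral path from leaf `i` to the root of `t ∈ 𝕋_A`
(`b = 0` if the path has only one subtree). -/
def tildeOf (A : Finset ℕ) (t : Finset (Finset ℕ)) (i : ℕ) : ℕ :=
  max i (max (minLbl (sibling t {i}))
    (if parentEdge t {i} = A then 0 else minLbl (sibling t (parentEdge t {i}))))

/-- Swap the leaf labels `i` and `j` in the tree `t`. -/
def swapTree (t : Finset (Finset ℕ)) (i j : ℕ) : Finset (Finset ℕ) :=
  t.image (Finset.image fun x => Equiv.swap i j x)

/-- Delete the leaf labeled `j` from the tree `t` (contracting its parent branch point). -/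
def delLeaf (t : Finset (Finset ℕ)) (j : ℕ) : Finset (Finset ℕ) :=
  (t.image fun B => B.erase j).erase ∅

/-- Down-move of the uniform chain starting from `t ∈ 𝕋_A` with selected leaf `i`:
swap labels `i` and `ĩ = max{i,a,b}` and delete the leaf now labeled `ĩ`. -/
def downUnif (A : Finset ℕ) (t : Finset (Finset ℕ)) (i : ℕ) : Finset (Finset ℕ) :=
  delLeaf (swapTree t i (tildeOf A t i)) (tildeOf A t i)

/-- Relabel all labels `> j` down by one. -/
def relabelGt (j : ℕ) (t : Finset (Finset ℕ)) : Finset (Finset ℕ) :=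
  t.image (Finset.image fun x => if j < x then x - 1 else x)

/-- Down-move of the alpha chain: after removing the leaf labeled `ĩ`, relabel the
leaves `ĩ+1, …, n` by `ĩ, …, n-1`. -/
def downAlpha (A : Finset ℕ) (t : Finset (Finset ℕ)) (i : ℕ) : Finset (Finset ℕ) :=
  relabelGt (tildeOf A t i) (downUnif A t i)

/-- Transition matrix of the uniform chain on `𝕋_{[n]}` (Definition 1.1):
uniform leaf selection, label-swapped deletion, uniform edge re-insertion of `ĩ`. -/
def PUnif (n : ℕ) (t t' : LTree (lbl n)) : ℝ :=
  (1 / (n : ℝ)) * ∑ i ∈ lbl n,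
    (1 / ((downUnif (lbl n) t.1 i).card : ℝ)) *
      ∑ S ∈ downUnif (lbl n) t.1 i,
        (if t'.1 = insertLeaf (downUnif (lbl n) t.1 i) S (tildeOf (lbl n) t.1 i) then 1 else 0)

/-- Transition matrix of the alpha chain on `𝕋_{[n]}` (Definition 2.4):
uniform leaf selection, label-swapped deletion with relabeling, and insertion of a new
leaf labeled `n` according to the alpha growth rule. -/
def PAlpha (α : ℝ) (n : ℕ) (t t' : LTree (lbl n)) : ℝ :=
  (1 / (n : ℝ)) * ∑ i ∈ lbl n, growStepF α (n - 1) (downAlpha (lbl n) t.1 i) t'.1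

/-- `t ∩ A`: the subtree of `t` spanned by the labels in `A`, reduced. -/
def restrictT (t : Finset (Finset ℕ)) (A : Finset ℕ) : Finset (Finset ℕ) :=
  (t.image fun B => B ∩ A).erase ∅

/-- The most recent ancestor edge of leaf `j` in `t` (including `{j}` itself)
that intersects the label set `A`. -/
def ancEdgeA (t : Finset (Finset ℕ)) (A : Finset ℕ) (j : ℕ) : Finset ℕ :=
  if h : (t.filter fun C => j ∈ C ∧ (C ∩ A).Nonempty).Nonempty then
    (t.filter fun C => j ∈ C ∧ (C ∩ A).Nonempty).inf' h id
  else ∅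

/-- The projection `π` sending a leaf `j` of `t` to an edge of `t ∩ A`. -/
def piProjA (t : Finset (Finset ℕ)) (A : Finset ℕ) (j : ℕ) : Finset ℕ := ancEdgeA t A j ∩ A

/-- Decorated trees: a tree shape together with a mass assignment on edges
(extended by zero off the shape). -/
abbrev DecoT : Type := Finset (Finset ℕ) × (Finset ℕ → ℕ)

/-- The decorated tree `ρ_A^{•(n)}(t)`: the reduced subtree `t ∩ A` with each edge
carrying the number of leaves of `t` projecting to it. -/
def rhoDecoA (n : ℕ) (A : Finset ℕ) (t : Finset (Finset ℕ)) : DecoT :=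
  (restrictT t A, fun B => ((lbl n).filter fun j => piProjA t A j = B).card)

/-- The decorated `k`-tree `ρ_k^{•(n)}(t)`. -/
def rhoDeco (n k : ℕ) (t : Finset (Finset ℕ)) : DecoT := rhoDecoA n (lbl k) t

/-- Collapsed trees: a tree shape together with a label-set assignment on edges. -/
abbrev StarT : Type := Finset (Finset ℕ) × (Finset ℕ → Finset ℕ)

/-- The collapsed `n`-tree with `k` leaves `ρ_k^{⋆(n)}(t)`. -/
def rhoStar (n k : ℕ) (t : Finset (Finset ℕ)) : StarT :=
  (restrictT t (lbl k), fun B => (lbl n).filter fun j => piProjA t (lbl k) j = B)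

/-- Replace each label set of a collapsed tree by its cardinality. -/
def starToDeco (ts : StarT) : DecoT := (ts.1, fun B => (ts.2 B).card)

/-- Membership in `𝕋_{[k]}^{•(n)}`: decorated `k`-trees with total mass `n`,
external masses at least 1, and mass vanishing off the shape. -/
def IsDeco (k n : ℕ) (d : DecoT) : Prop :=
  IsLTree (lbl k) d.1 ∧ (∀ B, B ∉ d.1 → d.2 B = 0) ∧ (∑ B ∈ d.1, d.2 B) = n ∧
    ∀ j ∈ lbl k, 1 ≤ d.2 {j}

/-- Edge mass of `ρ_k^{•(n)}(t)`. -/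
def massOf (n k : ℕ) (t : Finset (Finset ℕ)) (B : Finset ℕ) : ℕ := (rhoDeco n k t).2 B

/-- The urn counts of the decorated `k`-tree of `t`:
`x_i - 1` on external edges and `y_B` on internal edges. -/
def urnOf (n k : ℕ) (t : Finset (Finset ℕ)) : Finset ℕ → ℕ :=
  fun B => if B.card ≤ 1 then massOf n k t B - 1 else massOf n k t B

/-- Rising factorial `a^{(j)} = a (a+1) ⋯ (a+j-1)`. -/
def risingFac (a : ℝ) : ℕ → ℝ
  | 0 => 1
  | (j + 1) => risingFac a j * (a + j)

/-- Dirichlet-multinomial distribution `DM^β₃(m)` on triples summing to `m`, with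
parameters `(1-β, 1-β, β)`. -/
def dm3 (β : ℝ) (m j1 j2 j3 : ℕ) : ℝ :=
  if j1 + j2 + j3 = m then
    ((m.factorial : ℝ) / ((j1.factorial : ℝ) * (j2.factorial : ℝ) * (j3.factorial : ℝ))) *
      (risingFac (1 - β) j1 * risingFac (1 - β) j2 * risingFac β j3) / risingFac (2 - β) m
  else 0

/-- The decrement matrix `δ_α(N : m)` of the `(α,α)` regenerative composition. -/
def deltaAlpha (α : ℝ) (N m : ℕ) : ℝ :=
  α * (N.choose m : ℝ) * Real.Gamma ((m : ℝ) - α) * Real.Gamma ((N : ℝ) - (m : ℝ) + α) /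
    (Real.Gamma (1 - α) * Real.Gamma ((N : ℝ) + α))

/-- `δ(N : m) = δ_{1/2}(N : m)` in its binomial-coefficient form. -/
def deltaHalf (N m : ℕ) : ℝ :=
  (1 / (2 * (m : ℝ) - 1)) * (((2 * m).choose m : ℝ) *
    (((2 * N - 2 * m).choose (N - m)) : ℝ) / (((2 * N).choose N) : ℝ))

/-- Increase the mass of edge `C` by one. -/
def bumpD (d : DecoT) (C : Finset ℕ) : DecoT :=
  (d.1, fun B => if B = C then d.2 B + 1 else d.2 B)

/-- Decrease the mass of edge `C` by one. -/
def dropD (d : DecoT) (C : Finset ℕ) : DecoT :=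
  (d.1, fun B => if B = C then d.2 B - 1 else d.2 B)

/-- Up-move on decorated trees of total mass `m`: choose an edge with probability
`(x_j - α)/(m - α)` (external) or `(y_B + α)/(m - α)` (internal) and increase its
mass by one. -/
def upProb (α : ℝ) (m : ℕ) (d d' : DecoT) : ℝ :=
  ∑ C ∈ d.1,
    ((if 2 ≤ C.card then (d.2 C : ℝ) + α else (d.2 C : ℝ) - α) / ((m : ℝ) - α)) *
      (if d' = bumpD d C then 1 else 0)

/-- Case (B) mass reshuffle: set the mass of external edge `B` to `m` and reduce the
mass of its parent by `m`. -/
def caseBD (d : DecoT) (B : Finset ℕ) (m : ℕ) : DecoT :=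
  (d.1, fun C => if C = B then m else if C = parentEdge d.1 B then d.2 C - m else d.2 C)

/-- Restrict a mass function to a shape (zero off the shape). -/
def restrictF (s : Finset (Finset ℕ)) (f : Finset ℕ → ℕ) : Finset ℕ → ℕ :=
  fun B => if B ∈ s then f B else 0

/-- Insert leaf `j` on the external edge `{c}` of the decorated tree `(s, f)`, splitting
the mass of `{c}` as `x_c := j1+1`, `x_j := j2+1`, `y_{{c,j}} := j3`. -/
def insDecoExt (s : Finset (Finset ℕ)) (f : Finset ℕ → ℕ) (c j j1 j2 j3 : ℕ) : DecoT :=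
  (insertLeaf s {c} j,
    restrictF (insertLeaf s {c} j) fun B =>
      if B = ({c} : Finset ℕ) then j1 + 1 else if B = ({j} : Finset ℕ) then j2 + 1
      else if B = ({c, j} : Finset ℕ) then j3
      else if j ∈ B then f (B.erase j) else f B)

/-- Insert leaf `j` on the internal edge `C` of the decorated tree `(s, f)`, splitting
the mass of `C` as `y_{C∪{j}} := j1`, `y_C := j2`, `x_j := j3+1`. -/
def insDecoInt (s : Finset (Finset ℕ)) (f : Finset ℕ → ℕ) (C : Finset ℕ)
    (j j1 j2 j3 : ℕ) : DecoT :=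
  (insertLeaf s C j,
    restrictF (insertLeaf s C j) fun B =>
      if B = C ∪ {j} then j1 else if B = C then j2 else if B = ({j} : Finset ℕ) then j3 + 1
      else if j ∈ B then f (B.erase j) else f B)

/-- Inserting the label `j` into a decorated tree (Definition 4.2), with edge-selection
normalizer `M`: an external edge `{i}` is selected with probability `(x_i - 1)/M` and
its mass split via `DM^α₃(x_i - 2)`; an internal edge `B` is selected with probability
`y_B/M` and its mass split via `DM^{1-α}₃(y_B - 1)`. -/
def insProb (α : ℝ) (M : ℕ) (j : ℕ) (d d' : DecoT) : ℝ :=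
  ∑ C ∈ d.1,
    if 2 ≤ C.card then
      ((d.2 C : ℝ) / (M : ℝ)) *
        ∑ a ∈ Finset.range (d.2 C), ∑ b ∈ Finset.range (d.2 C),
          dm3 (1 - α) (d.2 C - 1) a b (d.2 C - 1 - a - b) *
            (if d' = insDecoInt d.1 d.2 C j a b (d.2 C - 1 - a - b) then 1 else 0)
    else
      (((d.2 C : ℝ) - 1) / (M : ℝ)) *
        ∑ a ∈ Finset.range (d.2 C), ∑ b ∈ Finset.range (d.2 C),
          dm3 α (d.2 C - 2) a b (d.2 C - 2 - a - b) *
            (if d' = insDecoExt d.1 d.2 (minLbl C) j a b (d.2 C - 2 - a - b) then 1 else 0)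

/-- Steps (iii)-(v) of resampling the label `i` (Definition 4.4) into a decorated tree of
total mass `n-1` (`n` being the total mass before the drop): choose an edge with
probability `(x_j - 1/2)/(n - 3/2)` (external) or `(y_B + 1/2)/(n - 3/2)` (internal) and
insert leaf `i` there, splitting the increased mass via `DM^{1/2}₃`. -/
def resampProb (n : ℕ) (i : ℕ) (d d' : DecoT) : ℝ :=
  ∑ C ∈ d.1,
    if 2 ≤ C.card then
      (((d.2 C : ℝ) + 1 / 2) / ((n : ℝ) - 3 / 2)) *
        ∑ a ∈ Finset.range (d.2 C + 1), ∑ b ∈ Finset.range (d.2 C + 1),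
          dm3 (1 / 2) (d.2 C) a b (d.2 C - a - b) *
            (if d' = insDecoInt d.1 d.2 C i a b (d.2 C - a - b) then 1 else 0)
    else
      (((d.2 C : ℝ) - 1 / 2) / ((n : ℝ) - 3 / 2)) *
        ∑ a ∈ Finset.range (d.2 C), ∑ b ∈ Finset.range (d.2 C),
          dm3 (1 / 2) (d.2 C - 1) a b (d.2 C - 1 - a - b) *
            (if d' = insDecoExt d.1 d.2 (minLbl C) i a b (d.2 C - 1 - a - b) then 1 else 0)

/-- Swap labels `i` and `j` in a decorated tree. -/
def swapD (d : DecoT) (i j : ℕ) : DecoT :=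
  (d.1.image (Finset.image fun x => Equiv.swap i j x),
    fun C => d.2 (C.image fun x => Equiv.swap i j x))

/-- Case (C) of the uniform decorated chain: swap `i = min B` with `ĩ`, delete leaf `ĩ`
(with its mass 1 and parent mass 0) and resample `ĩ`. -/
def caseCUnif (n k : ℕ) (d : DecoT) (B : Finset ℕ) (d' : DecoT) : ℝ :=
  resampProb n (tildeOf (lbl k) d.1 (minLbl B))
    (delLeaf (swapD d (minLbl B) (tildeOf (lbl k) d.1 (minLbl B))).1
        (tildeOf (lbl k) d.1 (minLbl B)),
      restrictF (delLeaf (swapD d (minLbl B) (tildeOf (lbl k) d.1 (minLbl B))).1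
          (tildeOf (lbl k) d.1 (minLbl B)))
        fun C => (swapD d (minLbl B) (tildeOf (lbl k) d.1 (minLbl B))).2 C +
          (swapD d (minLbl B) (tildeOf (lbl k) d.1 (minLbl B))).2
            (C ∪ {tildeOf (lbl k) d.1 (minLbl B)}))
    d'

/-- Transition matrix of the uniform decorated chain on `𝕋_{[k]}^{•(n)}`
(Definition 4.6). -/
def RUnif (n k : ℕ) (d d' : DecoT) : ℝ :=
  ∑ B ∈ d.1,
    ((d.2 B : ℝ) / (n : ℝ)) *
      (if 2 ≤ B.card ∨ 2 ≤ d.2 B then upProb (1 / 2) (n - 1) (dropD d B) d'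
       else if 0 < d.2 (parentEdge d.1 B) then
         ∑ m ∈ Finset.Icc 1 (d.2 (parentEdge d.1 B)),
           deltaHalf (d.2 (parentEdge d.1 B)) m * upProb (1 / 2) (n - 1) (caseBD d B m) d'
       else caseCUnif n k d B d')

/-- Insertion of label `j` followed by an up-move (used in case (C) of the alpha
decorated chain). -/
def insThenUp (α : ℝ) (n k j : ℕ) (d : DecoT) (d' : DecoT) : ℝ :=
  ∑ C ∈ d.1,
    if 2 ≤ C.card then
      ((d.2 C : ℝ) / ((n : ℝ) - (k : ℝ))) *
        ∑ a ∈ Finset.range (d.2 C), ∑ b ∈ Finset.range (d.2 C),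
          dm3 (1 - α) (d.2 C - 1) a b (d.2 C - 1 - a - b) *
            upProb α (n - 1) (insDecoInt d.1 d.2 C j a b (d.2 C - 1 - a - b)) d'
    else
      (((d.2 C : ℝ) - 1) / ((n : ℝ) - (k : ℝ))) *
        ∑ a ∈ Finset.range (d.2 C), ∑ b ∈ Finset.range (d.2 C),
          dm3 α (d.2 C - 2) a b (d.2 C - 2 - a - b) *
            upProb α (n - 1) (insDecoExt d.1 d.2 (minLbl C) j a b (d.2 C - 2 - a - b)) d'

/-- Dropping the label `it` from a decorated tree (Definition 4.1): delete leaf `it`,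
discard its mass and its parent's mass, and relabel the labels `> it` down by one. -/
def dropLabelD (d : DecoT) (it : ℕ) : DecoT :=
  ((delLeaf d.1 it).image (Finset.image fun x => if it < x then x - 1 else x),
    restrictF ((delLeaf d.1 it).image (Finset.image fun x => if it < x then x - 1 else x))
      fun C =>
        restrictF (delLeaf d.1 it) (fun C' => d.2 C' + d.2 (C' ∪ {it}))
          (C.image fun x => if it ≤ x then x + 1 else x))

/-- Case (C) of the alpha decorated chain: swap, drop the label `ĩ` (with relabeling),
insert the label `k` and perform an up-move. -/
def caseCAlpha (α : ℝ) (n k : ℕ) (d : DecoT) (B : Finset ℕ) (d' : DecoT) : ℝ :=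
  insThenUp α n k k
    (dropLabelD (swapD d (minLbl B) (tildeOf (lbl k) d.1 (minLbl B)))
      (tildeOf (lbl k) d.1 (minLbl B))) d'

/-- Transition matrix of the alpha decorated chain on `𝕋_{[k]}^{•(n)}`
(Definition 4.7). -/
def RAlpha (α : ℝ) (n k : ℕ) (d d' : DecoT) : ℝ :=
  ∑ B ∈ d.1,
    ((d.2 B : ℝ) / (n : ℝ)) *
      (if 2 ≤ B.card ∨ 2 ≤ d.2 B then upProb α (n - 1) (dropD d B) d'
       else if 0 < d.2 (parentEdge d.1 B) then
         ∑ m ∈ Finset.Icc 1 (d.2 (parentEdge d.1 B)),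
           deltaAlpha α (d.2 (parentEdge d.1 B)) m * upProb α (n - 1) (caseBD d B m) d'
       else caseCAlpha α n k d B d')

/-- The sub-probability transition matrix of the alpha decorated chain restricted to
moves that do not use case (C). -/
def RAlphaNoC (α : ℝ) (n k : ℕ) (d d' : DecoT) : ℝ :=
  ∑ B ∈ d.1,
    ((d.2 B : ℝ) / (n : ℝ)) *
      (if 2 ≤ B.card ∨ 2 ≤ d.2 B then upProb α (n - 1) (dropD d B) d'
       else if 0 < d.2 (parentEdge d.1 B) then
         ∑ m ∈ Finset.Icc 1 (d.2 (parentEdge d.1 B)),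
           deltaAlpha α (d.2 (parentEdge d.1 B)) m * upProb α (n - 1) (caseBD d B m) d'
       else 0)

/-- Probability that the next transition of the alpha decorated chain uses case (C)
and drops the label `it`. -/
def probDropC (n k : ℕ) (d : DecoT) (it : ℕ) : ℝ :=
  ∑ B ∈ d.1,
    if ¬(2 ≤ B.card ∨ 2 ≤ d.2 B) ∧ d.2 (parentEdge d.1 B) = 0 ∧
        tildeOf (lbl k) d.1 (minLbl B) = it then (d.2 B : ℝ) / (n : ℝ)
    else 0

/-- Rank (1-based) of `a` within the finite label set `A`. -/
def rankIn (A : Finset ℕ) (a : ℕ) : ℕ := (A.filter fun x => x ≤ a).card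

/-- Relabel the labels appearing in `u` by their ranks within `A`. -/
def relabelRank (A : Finset ℕ) (u : Finset (Finset ℕ)) : Finset (Finset ℕ) :=
  u.image (Finset.image (rankIn A))

/-- The label set `π^{-1}(B)` of leaves of `t` projecting to the edge `B` of `t ∩ [k]`. -/
def preimLbl (n k : ℕ) (t : Finset (Finset ℕ)) (B : Finset ℕ) : Finset ℕ :=
  (lbl n).filter fun j => piProjA t (lbl k) j = B

/-- The lowest edge of `t` mapping onto the edge `B` of `t ∩ [k]`. -/
def bottomEdge (k : ℕ) (t : Finset (Finset ℕ)) (B : Finset ℕ) : Finset ℕ :=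
  if h : (t.filter fun C => C ∩ lbl k = B).Nonempty then
    (t.filter fun C => C ∩ lbl k = B).inf' h id
  else ∅

/-- The internal structure `int(V_B)` of `ρ_k^{•(n)}(t)` supported on the edge `B` of
`t ∩ [k]`: the subtree of `t` collapsing to `B`, with the vertex corresponding to `B`
turned into a leaf labeled `1` if `B` is internal, all leaves relabeled by ranks. -/
def intStruct (n k : ℕ) (t : Finset (Finset ℕ)) (B : Finset ℕ) : Finset (Finset ℕ) :=
  if 2 ≤ B.card then
    relabelRank (insert 0 (preimLbl n k t B))
      ((t.image fun C =>
        (C ∩ preimLbl n k t B) ∪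
          (if (C ∩ bottomEdge k t B).Nonempty then ({0} : Finset ℕ) else ∅)).erase ∅)
  else
    relabelRank (preimLbl n k t B) ((t.image fun C => C ∩ preimLbl n k t B).erase ∅)

/-- The kernel `Λ(𝐭⋆, ·) = q_{n,1/2}( · ∣ ρ_k^{⋆(n)} = 𝐭⋆)`. -/
def LamStar (n k : ℕ) (ts : StarT) (t : LTree (lbl n)) : ℝ :=
  (unifMass n * (if rhoStar n k t.1 = ts then 1 else 0)) /
    (∑ t' : LTree (lbl n), unifMass n * (if rhoStar n k t'.1 = ts then 1 else 0))

/-- The induced transition matrix `K = Λ P ρ_k^{⋆(n)}` on collapsed trees. -/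
def KColl (n k : ℕ) (ts ts' : StarT) : ℝ :=
  ∑ t : LTree (lbl n), LamStar n k ts t *
    (∑ t'' : LTree (lbl n), PUnif n t t'' * (if rhoStar n k t''.1 = ts' then 1 else 0))

/-- The set `𝕋_{[k]}^{⋆(n)}` of collapsed `n`-trees with `k` leaves. -/
def allStar (n k : ℕ) : Finset StarT :=
  (Finset.univ : Finset (LTree (lbl n))).image fun t => rhoStar n k t.1

/-- The set `𝕋_{[k]}^{•(n)}` of decorated `k`-trees arising from `n`-trees. -/
def allDeco (n k : ℕ) : Finset DecoT :=
  (Finset.univ : Finset (LTree (lbl n))).image fun t => rhoDeco n k t.1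

/-- The kernel `Λ^{(α)}(𝐭•, ·) = q_{n,α}( · ∣ ρ_k^{•(n)} = 𝐭•)`. -/
def LamDeco (α : ℝ) (n k : ℕ) (d : DecoT) (t : LTree (lbl n)) : ℝ :=
  (qF α n t * (if rhoDeco n k t.1 = d then 1 else 0)) /
    (∑ t' : LTree (lbl n), qF α n t' * (if rhoDeco n k t'.1 = d then 1 else 0))

/-- Update rule of the generalized Pólya urn. -/
def bumpF (c : Finset ℕ → ℕ) (B : Finset ℕ) : Finset ℕ → ℕ :=
  fun C => if C = B then c C + 1 else c C

/-- One step of the generalized Pólya urn with colors the edges of `s`, in which color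
`B` is selected with probability proportional to `(1-α) + c B` (external) or
`α + c B` (internal). -/
def urnStep (α : ℝ) (s : Finset (Finset ℕ)) (c c' : Finset ℕ → ℕ) : ℝ :=
  ∑ B ∈ s, ((fordWeight α B + (c B : ℝ)) / (∑ B' ∈ s, (fordWeight α B' + (c B' : ℝ)))) *
    (if c' = bumpF c B then 1 else 0)

end

/-!
Inserting leaf `n` on an edge `S` of `T_{n-1}` leaves the reduced tree `T_{n-1} ∩ [k]` unchanged
and adds one unit of mass to the edge onto which `S` projects, namely the `[k]`-trace of the
lowest edge above `S` that meets `[k]`. The edges projecting onto an edge `B` of the reduced tree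
are those below the highest edge with trace `B`, minus those strictly below the lowest one. A
tree with leaf set `A` has total Ford weight `#A - α`, so these edges carry total weight
`x_B - α` if `B` is external and `y_B + α` if `B` is internal. Hence every tree with decorated
`k`-tree `𝐭•` grows into an up-move of `𝐭•`, whatever the law of `T_{n-1}`.
-/

theorem exists_isLeast_of_isChain {α : Type*} [PartialOrder α] {F : Finset α}
    (hF : F.Nonempty) (hch : IsChain (· ≤ ·) (F : Set α)) : ∃ a, IsLeast (F : Set α) a := by
  have hch' : IsChain (· ≥ ·) (F : Set α) := hch.symm
  obtain ⟨a, ha⟩ := F.exists_minimal hF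
  exact ⟨a, hch'.directedOn.minimal_iff_isLeast.1 ha⟩

theorem exists_isGreatest_of_isChain {α : Type*} [PartialOrder α] {F : Finset α}
    (hF : F.Nonempty) (hch : IsChain (· ≤ ·) (F : Set α)) : ∃ a, IsGreatest (F : Set α) a := by
  obtain ⟨a, ha⟩ := F.exists_maximal hF
  exact ⟨a, hch.directedOn.maximal_iff_isGreatest.1 ha⟩

theorem notMem_of_inter_eq_empty {α : Type*} [DecidableEq α] {s t : Finset α} (h : s ∩ t = ∅)
    {x : α} (hx : x ∈ s) : x ∉ t :=
  Finset.disjoint_left.1 (Finset.disjoint_iff_inter_eq_empty.2 h) hx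

namespace IsLTree

variable {A B C : Finset ℕ} {t : Finset (Finset ℕ)}

theorem subset (h : IsLTree A t) (hB : B ∈ t) : B ⊆ A := (h.1 B hB).1

theorem nonempty (h : IsLTree A t) (hB : B ∈ t) : B.Nonempty := (h.1 B hB).2

theorem singleton_mem (h : IsLTree A t) {j : ℕ} (hj : j ∈ A) : {j} ∈ t := h.2.1 j hj

theorem laminar (h : IsLTree A t) (hB : B ∈ t) (hC : C ∈ t) : B ∩ C = ∅ ∨ B ⊆ C ∨ C ⊆ B :=
  h.2.2.1 B hB C hC

theorem exists_sibling (h : IsLTree A t) (hB : B ∈ t) (hBA : B ≠ A) :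
    ∃ B' ∈ t, B ∩ B' = ∅ ∧ B ∪ B' ∈ t :=
  (h.2.2.2 B hB hBA).exists

theorem notMem_of_notMem (h : IsLTree A t) {j : ℕ} (hj : j ∉ A) (hB : B ∈ t) : j ∉ B :=
  fun hjB => hj (h.subset hB hjB)

theorem subset_or_subset (h : IsLTree A t) (hB : B ∈ t) (hC : C ∈ t)
    (hBC : (B ∩ C).Nonempty) : B ⊆ C ∨ C ⊆ B :=
  (h.laminar hB hC).resolve_left hBC.ne_empty

theorem isChain (h : IsLTree A t) {F : Finset (Finset ℕ)} (hFt : F ⊆ t) {x : ℕ}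
    (hx : ∀ C ∈ F, x ∈ C) : IsChain (· ≤ ·) (F : Set (Finset ℕ)) :=
  fun B hB C hC _ => h.subset_or_subset (hFt hB) (hFt hC) ⟨x, Finset.mem_inter.2 ⟨hx B hB, hx C hC⟩⟩

/-- In a laminar family of nonempty sets a set has at most one sibling, so only the existence
part of the sibling axiom needs checking. -/
theorem of_exists_sibling (h₁ : ∀ B ∈ t, B ⊆ A ∧ B.Nonempty) (h₂ : ∀ j ∈ A, {j} ∈ t)
    (h₃ : ∀ B₁ ∈ t, ∀ B₂ ∈ t, B₁ ∩ B₂ = ∅ ∨ B₁ ⊆ B₂ ∨ B₂ ⊆ B₁)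
    (h₄ : ∀ B ∈ t, B ≠ A → ∃ B', B' ∈ t ∧ B ∩ B' = ∅ ∧ B ∪ B' ∈ t) : IsLTree A t := by
  have parent_le : ∀ B ∈ t, ∀ B' ∈ t, ∀ B'' ∈ t, B ∩ B' = ∅ → B ∩ B'' = ∅ →
      B ∪ B' ∈ t → B ∪ B' ⊆ B ∪ B'' → B'' ⊆ B ∪ B' := by
    intro B hB B' hB' B'' hB'' h' h'' hP' hle
    obtain ⟨b, hb⟩ := (h₁ B hB).2
    obtain ⟨x, hx⟩ := (h₁ B' hB').2
    rcases h₃ B'' hB'' _ hP' with hdisj | hsub | hsup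
    · have hx'' : x ∈ B'' := by
        rcases Finset.mem_union.1 (hle (Finset.mem_union_right _ hx)) with hxB | hxB
        · exact absurd hx (notMem_of_inter_eq_empty h' hxB)
        · exact hxB
      exact absurd (Finset.mem_union_right _ hx) (notMem_of_inter_eq_empty hdisj hx'')
    · exact hsub
    · exact absurd (hsup (Finset.mem_union_left _ hb)) (notMem_of_inter_eq_empty h'' hb)
  refine ⟨h₁, h₂, h₃, fun B hB hBA => ?_⟩
  obtain ⟨B', ⟨hB't, h', hP'⟩⟩ := h₄ B hB hBA
  refine ⟨B', ⟨hB't, h', hP'⟩, fun B'' ⟨hB''t, h'', hP''⟩ => ?_⟩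
  have hP : B ∪ B'' = B ∪ B' := by
    obtain ⟨b, hb⟩ := (h₁ B hB).2
    rcases h₃ _ hP'' _ hP' with hdisj | hle | hge
    · exact absurd (Finset.mem_union_left _ hb)
        (notMem_of_inter_eq_empty hdisj (Finset.mem_union_left _ hb))
    · exact hle.antisymm (Finset.union_subset Finset.subset_union_left
        (parent_le B hB B'' hB''t B' hB't h'' h' hP'' hle))
    · exact (Finset.union_subset Finset.subset_union_left
        (parent_le B hB B' hB't B'' hB''t h' h'' hP' hge)).antisymm hge
  rw [← Finset.union_sdiff_cancel_left (Finset.disjoint_iff_inter_eq_empty.2 h''), hP,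
    Finset.union_sdiff_cancel_left (Finset.disjoint_iff_inter_eq_empty.2 h')]

theorem root_mem (h : IsLTree A t) (hA : A.Nonempty) : A ∈ t := by
  obtain ⟨j, hj⟩ := hA
  obtain ⟨M, hM⟩ := t.exists_maximal ⟨{j}, h.singleton_mem hj⟩
  by_contra hAt
  obtain ⟨M', hM't, hdisj, hunion⟩ := h.exists_sibling hM.1 fun hMA => hAt (hMA ▸ hM.1)
  obtain ⟨x, hx⟩ := h.nonempty hM't
  have hxM : x ∈ M := hM.2 hunion Finset.subset_union_left (Finset.mem_union_right _ hx)
  exact notMem_of_inter_eq_empty hdisj hxM hx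

theorem subtree (h : IsLTree A t) (hC : C ∈ t) : IsLTree C (t.filter (· ⊆ C)) := by
  refine of_exists_sibling (fun B hB => ?_) (fun j hj => ?_) (fun B₁ hB₁ B₂ hB₂ => ?_)
    (fun B hB hBC => ?_)
  · exact ⟨(Finset.mem_filter.1 hB).2, h.nonempty (Finset.mem_filter.1 hB).1⟩
  · exact Finset.mem_filter.2 ⟨h.singleton_mem (h.subset hC hj), Finset.singleton_subset_iff.2 hj⟩
  · exact h.laminar (Finset.mem_filter.1 hB₁).1 (Finset.mem_filter.1 hB₂).1
  obtain ⟨hBt, hBsub⟩ := Finset.mem_filter.1 hB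
  have hBA : B ≠ A := fun hBA => hBC (hBsub.antisymm (hBA ▸ h.subset hC))
  obtain ⟨B', hB't, hdisj, hunion⟩ := h.exists_sibling hBt hBA
  obtain ⟨b, hb⟩ := h.nonempty hBt
  have hPC : B ∪ B' ⊆ C := by
    rcases h.subset_or_subset hunion hC ⟨b, by simp [hb, hBsub hb]⟩ with hle | hCP
    · exact hle
    obtain ⟨y, hyC, hyB⟩ := Finset.exists_of_ssubset (hBsub.ssubset_of_ne hBC)
    have hyB' : y ∈ B' := (Finset.mem_union.1 (hCP hyC)).resolve_left hyB
    rcases h.subset_or_subset hC hB't ⟨y, by simp [hyC, hyB']⟩ with hCB' | hB'C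
    · exact absurd (hCB' (hBsub hb)) (notMem_of_inter_eq_empty hdisj hb)
    · exact Finset.union_subset hBsub hB'C
  exact ⟨B', Finset.mem_filter.2 ⟨hB't, (Finset.union_subset_iff.1 hPC).2⟩, hdisj,
    Finset.mem_filter.2 ⟨hunion, hPC⟩⟩

theorem exists_root_children (h : IsLTree A t) (hA : 2 ≤ A.card) :
    ∃ C₁ ∈ t, ∃ C₂ ∈ t, C₁ ∩ C₂ = ∅ ∧ C₁ ∪ C₂ = A ∧ ∀ S ∈ t, S ≠ A → S ⊆ C₁ ∨ S ⊆ C₂ := by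
  obtain ⟨j, hj⟩ := Finset.card_pos.1 (by omega : 0 < A.card)
  have hjA : {j} ≠ A := fun hjA => by simp [← hjA] at hA
  obtain ⟨C₁, hC₁⟩ := (t.erase A).exists_maximal ⟨{j}, Finset.mem_erase.2 ⟨hjA, h.singleton_mem hj⟩⟩
  obtain ⟨hC₁A, hC₁t⟩ := Finset.mem_erase.1 hC₁.1
  obtain ⟨C₂, hC₂t, hdisj, hunion⟩ := h.exists_sibling hC₁t hC₁A
  have hroot : C₁ ∪ C₂ = A := by
    by_contra hne
    obtain ⟨x, hx⟩ := h.nonempty hC₂t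
    have hxC₁ := hC₁.2 (Finset.mem_erase.2 ⟨hne, hunion⟩) Finset.subset_union_left
      (Finset.mem_union_right _ hx)
    exact notMem_of_inter_eq_empty hdisj hxC₁ hx
  refine ⟨C₁, hC₁t, C₂, hC₂t, hdisj, hroot, fun S hS hSA => ?_⟩
  rcases h.laminar hS hC₁t with hSC₁ | hSC₁ | hC₁S
  · right
    intro x hx
    have hxA : x ∈ C₁ ∪ C₂ := hroot ▸ h.subset hS hx
    exact (Finset.mem_union.1 hxA).resolve_left (notMem_of_inter_eq_empty hSC₁ hx)
  · exact Or.inl hSC₁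
  · exact Or.inl (hC₁.2 (Finset.mem_erase.2 ⟨hSA, hS⟩) hC₁S)

theorem exists_children (h : IsLTree A t) (hB : B ∈ t) (hB2 : 2 ≤ B.card) :
    ∃ C₁ ∈ t, ∃ C₂ ∈ t, C₁ ∩ C₂ = ∅ ∧ C₁ ∪ C₂ = B ∧ ∀ S ∈ t, S ⊂ B → S ⊆ C₁ ∨ S ⊆ C₂ := by
  obtain ⟨C₁, hC₁, C₂, hC₂, hdisj, hunion, hsplit⟩ := (h.subtree hB).exists_root_children hB2
  exact ⟨C₁, (Finset.mem_filter.1 hC₁).1, C₂, (Finset.mem_filter.1 hC₂).1, hdisj, hunion,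
    fun S hS hSB => hsplit S (Finset.mem_filter.2 ⟨hS, hSB.1⟩) hSB.ne⟩

theorem sum_eq_add_sum_subtree_add_sum_subtree (h : IsLTree A t) (hA : A.Nonempty)
    {C₁ C₂ : Finset ℕ} (hC₁A : C₁ ⊂ A) (hC₂A : C₂ ⊂ A) (hdisj : C₁ ∩ C₂ = ∅)
    (hsplit : ∀ S ∈ t, S ≠ A → S ⊆ C₁ ∨ S ⊆ C₂) (f : Finset ℕ → ℝ) :
    ∑ S ∈ t, f S = f A + (∑ S ∈ t.filter (· ⊆ C₁), f S + ∑ S ∈ t.filter (· ⊆ C₂), f S) := by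
  have ht : t = insert A (t.filter (· ⊆ C₁) ∪ t.filter (· ⊆ C₂)) := by
    ext S
    simp only [Finset.mem_insert, Finset.mem_union, Finset.mem_filter]
    constructor
    · intro hS
      by_cases hSA : S = A
      · exact Or.inl hSA
      · exact Or.inr ((hsplit S hS hSA).imp (⟨hS, ·⟩) (⟨hS, ·⟩))
    · rintro (rfl | ⟨hS, -⟩ | ⟨hS, -⟩)
      exacts [h.root_mem hA, hS, hS]
  have hAnot : A ∉ t.filter (· ⊆ C₁) ∪ t.filter (· ⊆ C₂) := by
    simp only [Finset.mem_union, Finset.mem_filter, not_or, not_and]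
    exact ⟨fun _ hAC => hC₁A.not_subset hAC, fun _ hAC => hC₂A.not_subset hAC⟩
  have hdisj' : Disjoint (t.filter (· ⊆ C₁)) (t.filter (· ⊆ C₂)) := by
    refine Finset.disjoint_left.2 fun S hS₁ hS₂ => ?_
    obtain ⟨x, hx⟩ := h.nonempty (Finset.mem_filter.1 hS₁).1
    exact notMem_of_inter_eq_empty hdisj ((Finset.mem_filter.1 hS₁).2 hx)
      ((Finset.mem_filter.1 hS₂).2 hx)
  conv_lhs => rw [ht]
  rw [Finset.sum_insert hAnot, Finset.sum_union hdisj']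

/-- A tree with leaf set `A` has `#A` external and `#A - 1` internal edges. -/
theorem sum_fordWeight (α : ℝ) (h : IsLTree A t) (hA : A.Nonempty) :
    ∑ S ∈ t, fordWeight α S = A.card - α := by
  induction A using Finset.strongInduction generalizing t with
  | H A ih =>
  rcases Nat.lt_or_ge A.card 2 with hA1 | hA2
  · obtain ⟨a, rfl⟩ := Finset.card_eq_one.1 (by have := hA.card_pos; omega : A.card = 1)
    have ht : t = {{a}} := by
      refine Finset.eq_singleton_iff_unique_mem.2 ⟨h.singleton_mem (Finset.mem_singleton_self a),
        fun B hB => ?_⟩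
      exact (Finset.Nonempty.subset_singleton_iff (h.nonempty hB)).1 (h.subset hB)
    simp [ht, fordWeight]
  obtain ⟨C₁, hC₁, C₂, hC₂, hdisj, hunion, hsplit⟩ := h.exists_root_children hA2
  have hC₁A : C₁ ⊂ A := hunion ▸ left_lt_sup.2 fun hC₂C₁ => by
    obtain ⟨x, hx⟩ := h.nonempty hC₂
    exact notMem_of_inter_eq_empty hdisj (hC₂C₁ hx) hx
  have hC₂A : C₂ ⊂ A := hunion ▸ right_lt_sup.2 fun hC₁C₂ => by
    obtain ⟨x, hx⟩ := h.nonempty hC₁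
    exact notMem_of_inter_eq_empty hdisj hx (hC₁C₂ hx)
  have hcard : A.card = C₁.card + C₂.card := by
    rw [← hunion, Finset.card_union_of_disjoint (Finset.disjoint_iff_inter_eq_empty.2 hdisj)]
  rw [h.sum_eq_add_sum_subtree_add_sum_subtree hA hC₁A hC₂A hdisj hsplit,
    ih C₁ hC₁A (h.subtree hC₁) (h.nonempty hC₁), ih C₂ hC₂A (h.subtree hC₂) (h.nonempty hC₂),
    hcard, fordWeight, if_pos hA2]
  push_cast
  ring

end IsLTree

section Insertion

variable {A B C S : Finset ℕ} {s : Finset (Finset ℕ)} {j : ℕ}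

theorem mem_insertLeaf :
    B ∈ insertLeaf s S j ↔
      B ∈ s ∧ (B ∩ S = ∅ ∨ B ⊆ S) ∨ (∃ C ∈ s, S ⊆ C ∧ B = C ∪ {j}) ∨ B = {j} := by
  simp only [insertLeaf, Finset.mem_union, Finset.mem_filter, Finset.mem_image,
    Finset.mem_singleton]
  grind

theorem singleton_mem_insertLeaf : {j} ∈ insertLeaf s S j :=
  mem_insertLeaf.2 (Or.inr (Or.inr rfl))

theorem union_mem_insertLeaf (hC : C ∈ s) (hSC : S ⊆ C) : C ∪ {j} ∈ insertLeaf s S j :=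
  mem_insertLeaf.2 (Or.inr (Or.inl ⟨C, hC, hSC, rfl⟩))

theorem mem_insertLeaf_of_not_subset (h : IsLTree A s) (hS : S ∈ s) (hC : C ∈ s)
    (hSC : ¬S ⊆ C) : C ∈ insertLeaf s S j :=
  mem_insertLeaf.2 (Or.inl ⟨hC, (h.laminar hC hS).imp_right (Or.resolve_right · hSC)⟩)

theorem exists_lift_mem_insertLeaf (h : IsLTree A s) (hS : S ∈ s) (hC : C ∈ s) :
    ∃ Y ∈ insertLeaf s S j, Y = C ∨ Y = C ∪ {j} := by
  by_cases hSC : S ⊆ C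
  · exact ⟨C ∪ {j}, union_mem_insertLeaf hC hSC, Or.inr rfl⟩
  · exact ⟨C, mem_insertLeaf_of_not_subset h hS hC hSC, Or.inl rfl⟩

private theorem laminar_comm {X Y : Finset ℕ} (hXY : X ∩ Y = ∅ ∨ X ⊆ Y ∨ Y ⊆ X) :
    Y ∩ X = ∅ ∨ Y ⊆ X ∨ X ⊆ Y := by
  rw [Finset.inter_comm]
  tauto

theorem insertLeaf_laminar (h : IsLTree A s) (hS : S ∈ s) (hj : j ∉ A) :
    ∀ B₁ ∈ insertLeaf s S j, ∀ B₂ ∈ insertLeaf s S j,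
      B₁ ∩ B₂ = ∅ ∨ B₁ ⊆ B₂ ∨ B₂ ⊆ B₁ := by
  have hSne := h.nonempty hS
  have old_new : ∀ B ∈ s, (B ∩ S = ∅ ∨ B ⊆ S) → ∀ C ∈ s, S ⊆ C →
      B ∩ (C ∪ {j}) = ∅ ∨ B ⊆ C ∪ {j} ∨ C ∪ {j} ⊆ B := by
    intro B hB hBS C hC hSC
    rcases h.laminar hB hC with hBC | hBC | hCB
    · left
      rw [Finset.inter_union_distrib_left, hBC, Finset.empty_union,
        Finset.inter_singleton_of_notMem (h.notMem_of_notMem hj hB)]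
    · exact Or.inr (Or.inl (hBC.trans Finset.subset_union_left))
    · have hBC : B = C := by
        rcases hBS with hBS | hBS
        · obtain ⟨x, hx⟩ := hSne
          exact absurd (hCB (hSC hx)) (notMem_of_inter_eq_empty (by rwa [Finset.inter_comm]) hx)
        · exact (hBS.trans hSC).antisymm hCB
      exact Or.inr (Or.inl (hBC ▸ Finset.subset_union_left))
  intro B₁ hB₁ B₂ hB₂
  rcases mem_insertLeaf.1 hB₁ with ⟨hB₁s, hB₁S⟩ | ⟨C₁, hC₁, hSC₁, rfl⟩ | rfl <;>
    rcases mem_insertLeaf.1 hB₂ with ⟨hB₂s, hB₂S⟩ | ⟨C₂, hC₂, hSC₂, rfl⟩ | rfl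
  · exact h.laminar hB₁s hB₂s
  · exact old_new B₁ hB₁s hB₁S C₂ hC₂ hSC₂
  · exact Or.inl (Finset.inter_singleton_of_notMem (h.notMem_of_notMem hj hB₁s))
  · exact laminar_comm (old_new B₂ hB₂s hB₂S C₁ hC₁ hSC₁)
  · obtain ⟨x, hx⟩ := hSne
    rcases h.subset_or_subset hC₁ hC₂ ⟨x, Finset.mem_inter.2 ⟨hSC₁ hx, hSC₂ hx⟩⟩ with hle | hle
    · exact Or.inr (Or.inl (Finset.union_subset_union_left hle))
    · exact Or.inr (Or.inr (Finset.union_subset_union_left hle))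
  · exact Or.inr (Or.inr Finset.subset_union_right)
  · exact Or.inl (Finset.singleton_inter_of_notMem (h.notMem_of_notMem hj hB₂s))
  · exact Or.inr (Or.inl Finset.subset_union_right)
  · exact Or.inr (Or.inl le_rfl)

theorem exists_sibling_insertLeaf_of_mem (h : IsLTree A s) (hS : S ∈ s) (hj : j ∉ A)
    (hB : B ∈ s) (hBS : B ∩ S = ∅ ∨ B ⊆ S) (hBS' : B ≠ S) :
    ∃ B' ∈ insertLeaf s S j, B ∩ B' = ∅ ∧ B ∪ B' ∈ insertLeaf s S j := by
  have hBA : B ≠ A := by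
    rintro rfl
    obtain ⟨x, hx⟩ := h.nonempty hS
    have hBS : B ⊆ S := hBS.resolve_left fun hBS => notMem_of_inter_eq_empty hBS (h.subset hS hx) hx
    exact hBS' (hBS.antisymm (h.subset hS))
  obtain ⟨B', hB', hdisj, hunion⟩ := h.exists_sibling hB hBA
  by_cases hSB' : S ⊆ B'
  · refine ⟨B' ∪ {j}, union_mem_insertLeaf hB' hSB', ?_, ?_⟩
    · rw [Finset.inter_union_distrib_left, hdisj, Finset.empty_union,
        Finset.inter_singleton_of_notMem (h.notMem_of_notMem hj hB)]
    · rw [← Finset.union_assoc]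
      exact union_mem_insertLeaf hunion (hSB'.trans Finset.subset_union_right)
  refine ⟨B', mem_insertLeaf_of_not_subset h hS hB' hSB', hdisj, ?_⟩
  by_cases hSP : S ⊆ B ∪ B'
  · have hBS : B ⊆ S := hBS.resolve_left fun hBS => hSB' fun x hx =>
      (Finset.mem_union.1 (hSP hx)).resolve_left (notMem_of_inter_eq_empty
        (by rwa [Finset.inter_comm]) hx)
    obtain ⟨y, hyS, hyB⟩ := Finset.exists_of_ssubset (hBS.ssubset_of_ne hBS')
    have hyB' : y ∈ B' := (Finset.mem_union.1 (hSP hyS)).resolve_left hyB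
    have hB'S : B' ⊆ S :=
      (h.subset_or_subset hS hB' ⟨y, Finset.mem_inter.2 ⟨hyS, hyB'⟩⟩).resolve_left hSB'
    exact mem_insertLeaf.2 (Or.inl ⟨hunion, Or.inr (Finset.union_subset hBS hB'S)⟩)
  · exact mem_insertLeaf_of_not_subset h hS hunion hSP

theorem exists_sibling_insertLeaf (h : IsLTree A s) (hS : S ∈ s) (hj : j ∉ A)
    (hB : B ∈ insertLeaf s S j) (hBA : B ≠ insert j A) :
    ∃ B' ∈ insertLeaf s S j, B ∩ B' = ∅ ∧ B ∪ B' ∈ insertLeaf s S j := by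
  have hjS : j ∉ S := h.notMem_of_notMem hj hS
  rcases mem_insertLeaf.1 hB with ⟨hBs, hBS⟩ | ⟨C, hC, hSC, rfl⟩ | rfl
  · by_cases hBS' : B = S
    · subst hBS'
      exact ⟨{j}, singleton_mem_insertLeaf, Finset.inter_singleton_of_notMem hjS,
        union_mem_insertLeaf hS le_rfl⟩
    · exact exists_sibling_insertLeaf_of_mem h hS hj hBs hBS hBS'
  · have hCA : C ≠ A := by
      rintro rfl
      exact hBA (by rw [Finset.union_comm, ← Finset.insert_eq])
    obtain ⟨C', hC', hdisj, hunion⟩ := h.exists_sibling hC hCA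
    have hSC' : ¬S ⊆ C' := fun hSC' => by
      obtain ⟨x, hx⟩ := h.nonempty hS
      exact notMem_of_inter_eq_empty hdisj (hSC hx) (hSC' hx)
    refine ⟨C', mem_insertLeaf_of_not_subset h hS hC' hSC', ?_, ?_⟩
    · rw [Finset.union_inter_distrib_right, hdisj, Finset.empty_union,
        Finset.singleton_inter_of_notMem (h.notMem_of_notMem hj hC')]
    · rw [Finset.union_right_comm]
      exact union_mem_insertLeaf hunion (hSC.trans Finset.subset_union_left)
  · refine ⟨S, mem_insertLeaf.2 (Or.inl ⟨hS, Or.inr le_rfl⟩),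
      Finset.singleton_inter_of_notMem hjS, ?_⟩
    rw [Finset.union_comm]
    exact union_mem_insertLeaf hS le_rfl

theorem insertLeaf_isLTree (h : IsLTree A s) (hS : S ∈ s) (hj : j ∉ A) :
    IsLTree (insert j A) (insertLeaf s S j) := by
  refine IsLTree.of_exists_sibling (fun B hB => ?_) (fun i hi => ?_)
    (insertLeaf_laminar h hS hj) (fun B hB hBA => exists_sibling_insertLeaf h hS hj hB hBA)
  · rcases mem_insertLeaf.1 hB with ⟨hBs, -⟩ | ⟨C, hC, -, rfl⟩ | rfl
    · exact ⟨(h.subset hBs).trans (Finset.subset_insert j A), h.nonempty hBs⟩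
    · refine ⟨?_, (h.nonempty hC).mono Finset.subset_union_left⟩
      rw [Finset.union_comm, ← Finset.insert_eq]
      exact Finset.insert_subset_insert j (h.subset hC)
    · exact ⟨Finset.singleton_subset_iff.2 (Finset.mem_insert_self j A),
        Finset.singleton_nonempty j⟩
  · rcases Finset.mem_insert.1 hi with rfl | hi
    · exact singleton_mem_insertLeaf
    · refine mem_insertLeaf.2 (Or.inl ⟨h.singleton_mem hi, ?_⟩)
      by_cases hiS : i ∈ S
      · exact Or.inr (Finset.singleton_subset_iff.2 hiS)
      · exact Or.inl (Finset.singleton_inter_of_notMem hiS)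

end Insertion

section Projection

variable {A K S T : Finset ℕ} {s : Finset (Finset ℕ)} {j : ℕ}

def ancTraces (s : Finset (Finset ℕ)) (K T : Finset ℕ) : Finset (Finset ℕ) :=
  (s.filter fun C => T ⊆ C ∧ (C ∩ K).Nonempty).image (· ∩ K)

/-- The edge of the reduced tree `s ∩ K` onto which `T` projects, extending `piProjA` from
leaves to arbitrary label sets: in a tree the traces in `ancTraces s K T` form a chain, whose
least element is the trace of the lowest edge above `T` meeting `K`. -/
def edgeProj (s : Finset (Finset ℕ)) (K T : Finset ℕ) : Finset ℕ :=
  if h : (ancTraces s K T).Nonempty then (ancTraces s K T).inf' h id else ∅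

theorem restrictT_eq_ancTraces : restrictT s K = ancTraces s K ∅ := by
  ext X
  simp only [restrictT, ancTraces, Finset.mem_erase, Finset.mem_image, Finset.mem_filter,
    Finset.empty_subset, true_and, Finset.nonempty_iff_ne_empty]
  grind

theorem piProjA_eq_edgeProj : piProjA s K j = edgeProj s K {j} := by
  simp only [piProjA, ancEdgeA, edgeProj, ancTraces, Finset.singleton_subset_iff]
  set F := s.filter fun C => j ∈ C ∧ (C ∩ K).Nonempty
  by_cases hF : F.Nonempty
  · rw [dif_pos hF, dif_pos (hF.image _), Finset.inf'_image]
    refine le_antisymm (Finset.le_inf' _ _ fun C hC => ?_)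
      (Finset.subset_inter (Finset.le_inf' _ _ fun C hC => ?_) ?_)
    · exact Finset.inter_subset_inter_right (Finset.inf'_le id hC)
    · exact (Finset.inf'_le _ hC).trans Finset.inter_subset_left
    · obtain ⟨C, hC⟩ := hF
      exact (Finset.inf'_le _ hC).trans Finset.inter_subset_right
  · rw [dif_neg hF, dif_neg (fun hne => hF (Finset.image_nonempty.1 hne)), Finset.empty_inter]

theorem edgeProj_eq_of_isLeast {L : Finset ℕ}
    (hL : IsLeast (s.filter fun C => T ⊆ C ∧ (C ∩ K).Nonempty : Set (Finset ℕ)) L) :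
    edgeProj s K T = L ∩ K := by
  have hLmem : L ∩ K ∈ ancTraces s K T := Finset.mem_image_of_mem _ hL.1
  rw [edgeProj, dif_pos ⟨_, hLmem⟩]
  refine le_antisymm (Finset.inf'_le id hLmem) (Finset.le_inf' _ _ fun X hX => ?_)
  obtain ⟨C, hC, rfl⟩ := Finset.mem_image.1 hX
  exact Finset.inter_subset_inter_right (hL.2 hC)

theorem IsLTree.exists_isLeast_anc (h : IsLTree A s) (hT : T.Nonempty) (hTA : T ⊆ A)
    (hK : K.Nonempty) (hKA : K ⊆ A) :
    ∃ L, IsLeast (s.filter fun C => T ⊆ C ∧ (C ∩ K).Nonempty : Set (Finset ℕ)) L := by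
  obtain ⟨x, hx⟩ := hT
  refine exists_isLeast_of_isChain ⟨A, ?_⟩
    (h.isChain (Finset.filter_subset _ s) (x := x) fun C hC => ?_)
  · exact Finset.mem_filter.2 ⟨h.root_mem (hK.mono hKA), hTA, by rwa [Finset.inter_eq_right.2 hKA]⟩
  · exact (Finset.mem_filter.1 hC).2.1 hx

theorem IsLTree.edgeProj_mem_restrictT (h : IsLTree A s) (hT : T.Nonempty) (hTA : T ⊆ A)
    (hK : K.Nonempty) (hKA : K ⊆ A) : edgeProj s K T ∈ restrictT s K := by
  obtain ⟨L, hL⟩ := h.exists_isLeast_anc hT hTA hK hKA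
  obtain ⟨hLs, -, hLK⟩ := Finset.mem_filter.1 hL.1
  rw [edgeProj_eq_of_isLeast hL, restrictT_eq_ancTraces]
  exact Finset.mem_image_of_mem _ (Finset.mem_filter.2 ⟨hLs, Finset.empty_subset L, hLK⟩)

theorem union_singleton_inter_of_notMem {C : Finset ℕ} (hjK : j ∉ K) : (C ∪ {j}) ∩ K = C ∩ K := by
  rw [Finset.union_inter_distrib_right, Finset.singleton_inter_of_notMem hjK, Finset.union_empty]

theorem ancTraces_insertLeaf (h : IsLTree A s) (hS : S ∈ s) (hjK : j ∉ K) (hjT : j ∉ T) :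
    ancTraces (insertLeaf s S j) K T = ancTraces s K T := by
  ext X
  simp only [ancTraces, Finset.mem_image, Finset.mem_filter]
  constructor
  · rintro ⟨Y, ⟨hY, hTY, hYK⟩, rfl⟩
    rcases mem_insertLeaf.1 hY with ⟨hYs, -⟩ | ⟨C, hC, -, rfl⟩ | rfl
    · exact ⟨Y, ⟨hYs, hTY, hYK⟩, rfl⟩
    · rw [union_singleton_inter_of_notMem hjK] at hYK ⊢
      refine ⟨C, ⟨hC, fun x hx => ?_, hYK⟩, rfl⟩
      exact (Finset.mem_union.1 (hTY hx)).resolve_right fun hxj =>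
        hjT (Finset.mem_singleton.1 hxj ▸ hx)
    · simp [Finset.singleton_inter_of_notMem hjK] at hYK
  · rintro ⟨C, ⟨hC, hTC, hCK⟩, rfl⟩
    obtain ⟨Y, hY, rfl | rfl⟩ := exists_lift_mem_insertLeaf (j := j) h hS hC
    · exact ⟨Y, ⟨hY, hTC, hCK⟩, rfl⟩
    · rw [← union_singleton_inter_of_notMem hjK] at hCK ⊢
      exact ⟨C ∪ {j}, ⟨hY, hTC.trans Finset.subset_union_left, hCK⟩, rfl⟩

theorem ancTraces_insertLeaf_singleton (h : IsLTree A s) (hj : j ∉ A) (hjK : j ∉ K) :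
    ancTraces (insertLeaf s S j) K {j} = ancTraces s K S := by
  ext X
  simp only [ancTraces, Finset.mem_image, Finset.mem_filter, Finset.singleton_subset_iff]
  constructor
  · rintro ⟨Y, ⟨hY, hjY, hYK⟩, rfl⟩
    rcases mem_insertLeaf.1 hY with ⟨hYs, -⟩ | ⟨C, hC, hSC, rfl⟩ | rfl
    · exact absurd hjY (h.notMem_of_notMem hj hYs)
    · rw [union_singleton_inter_of_notMem hjK] at hYK ⊢
      exact ⟨C, ⟨hC, hSC, hYK⟩, rfl⟩
    · simp [Finset.singleton_inter_of_notMem hjK] at hYK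
  · rintro ⟨C, ⟨hC, hSC, hCK⟩, rfl⟩
    rw [← union_singleton_inter_of_notMem hjK] at hCK ⊢
    exact ⟨C ∪ {j}, ⟨union_mem_insertLeaf hC hSC, by simp, hCK⟩, rfl⟩

end Projection

theorem lbl_succ (m : ℕ) : lbl (m + 1) = insert (m + 1) (lbl m) := by
  ext x
  simp only [lbl, Finset.mem_Icc, Finset.mem_insert]
  omega

theorem rhoDecoA_insertLeaf {m : ℕ} {K S : Finset ℕ} {s : Finset (Finset ℕ)}
    (h : IsLTree (lbl m) s) (hS : S ∈ s) (hK : m + 1 ∉ K) :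
    rhoDecoA (m + 1) K (insertLeaf s S (m + 1)) = bumpD (rhoDecoA m K s) (edgeProj s K S) := by
  have hj : m + 1 ∉ lbl m := by simp [lbl]
  have hold : ∀ i ∈ lbl m, piProjA (insertLeaf s S (m + 1)) K i = piProjA s K i := by
    intro i hi
    have hji : m + 1 ∉ ({i} : Finset ℕ) := fun hji => hj (Finset.mem_singleton.1 hji ▸ hi)
    rw [piProjA_eq_edgeProj, piProjA_eq_edgeProj, edgeProj, edgeProj,
      ancTraces_insertLeaf h hS hK hji]
  have hnew : piProjA (insertLeaf s S (m + 1)) K (m + 1) = edgeProj s K S := by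
    rw [piProjA_eq_edgeProj, edgeProj, edgeProj, ancTraces_insertLeaf_singleton h hj hK]
  refine Prod.ext ?_ (funext fun B => ?_)
  · simp only [rhoDecoA, bumpD, restrictT_eq_ancTraces,
      ancTraces_insertLeaf h hS hK (Finset.notMem_empty _)]
  · have hfilter : (lbl m).filter (piProjA (insertLeaf s S (m + 1)) K · = B) =
        (lbl m).filter (piProjA s K · = B) :=
      Finset.filter_congr fun i hi => by rw [hold i hi]
    simp only [rhoDecoA, bumpD, lbl_succ, Finset.filter_insert, hnew, hfilter]
    by_cases hB : edgeProj s K S = B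
    · rw [if_pos hB, if_pos hB.symm, Finset.card_insert_of_notMem
        fun hmem => hj (Finset.mem_filter.1 hmem).1]
    · rw [if_neg hB, if_neg (Ne.symm hB)]

theorem singleton_ssubset_iff_two_le_card {α : Type*} {a : α} {C : Finset α} :
    {a} ⊂ C ↔ a ∈ C ∧ 2 ≤ C.card := by
  rw [Finset.ssubset_iff_subset_ne, Finset.singleton_subset_iff]
  refine and_congr_right fun ha => ⟨fun hne => ?_, fun h2 hC => by simp [← hC] at h2⟩
  have := Finset.card_lt_card
    (Finset.ssubset_iff_subset_ne.2 ⟨Finset.singleton_subset_iff.2 ha, hne⟩)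
  rwa [Finset.card_singleton] at this

section Fiber

variable {A K B Cm CM : Finset ℕ} {s : Finset (Finset ℕ)}

theorem IsLTree.not_ssubset_of_trace_eq (h : IsLTree A s) {S L : Finset ℕ} (hS : S ∈ s)
    (hm : IsLeast (s.filter (· ∩ K = B) : Set (Finset ℕ)) Cm)
    (hL : IsLeast (s.filter fun C => S ⊆ C ∧ (C ∩ K).Nonempty : Set (Finset ℕ)) L)
    (hLB : L ∩ K = B) : ¬S ⊂ Cm := by
  intro hSCm
  obtain ⟨hCms, hCmK⟩ := Finset.mem_filter.1 hm.1
  have hCmL : Cm ⊆ L := hm.2 (Finset.mem_filter.2 ⟨(Finset.mem_filter.1 hL.1).1, hLB⟩)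
  -- The child of `Cm` containing `S` cannot meet `K` (it would contain `L ⊇ Cm`), so its
  -- sibling is an edge strictly below `Cm` with trace `B`.
  have no_child : ∀ C₁ ∈ s, ∀ C₂ ∈ s, C₁ ∩ C₂ = ∅ → C₁ ∪ C₂ = Cm → S ⊆ C₁ → False := by
    intro C₁ hC₁ C₂ hC₂ hdisj hunion hSC₁
    by_cases hC₁K : (C₁ ∩ K).Nonempty
    · obtain ⟨x, hx⟩ := h.nonempty hC₂
      have hCmC₁ : Cm ⊆ C₁ := hCmL.trans (hL.2 (Finset.mem_filter.2 ⟨hC₁, hSC₁, hC₁K⟩))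
      exact notMem_of_inter_eq_empty hdisj (hCmC₁ (hunion ▸ Finset.mem_union_right _ hx)) hx
    · have hC₂K : C₂ ∩ K = B := by
        rw [← hCmK, ← hunion, Finset.union_inter_distrib_right,
          Finset.not_nonempty_iff_eq_empty.1 hC₁K, Finset.empty_union]
      obtain ⟨y, hy⟩ := h.nonempty hC₁
      have hCmC₂ : Cm ⊆ C₂ := hm.2 (Finset.mem_filter.2 ⟨hC₂, hC₂K⟩)
      exact notMem_of_inter_eq_empty hdisj hy (hCmC₂ (hunion ▸ Finset.mem_union_left _ hy))
  have hCm2 : 2 ≤ Cm.card := by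
    have := Finset.card_lt_card hSCm
    have := (h.nonempty hS).card_pos
    omega
  obtain ⟨C₁, hC₁, C₂, hC₂, hdisj, hunion, hsplit⟩ := h.exists_children hCms hCm2
  rcases hsplit S hS hSCm with hSC | hSC
  · exact no_child C₁ hC₁ C₂ hC₂ hdisj hunion hSC
  · exact no_child C₂ hC₂ C₁ hC₁ (by rwa [Finset.inter_comm]) (by rwa [Finset.union_comm]) hSC

theorem IsLTree.edgeProj_eq_iff (h : IsLTree A s) (hK : K.Nonempty) (hKA : K ⊆ A)
    (hB : B.Nonempty) (hm : IsLeast (s.filter (· ∩ K = B) : Set (Finset ℕ)) Cm)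
    (hM : IsGreatest (s.filter (· ∩ K = B) : Set (Finset ℕ)) CM) {S : Finset ℕ} (hS : S ∈ s) :
    edgeProj s K S = B ↔ S ⊆ CM ∧ ¬S ⊂ Cm := by
  obtain ⟨hCms, hCmK⟩ := Finset.mem_filter.1 hm.1
  obtain ⟨hCMs, hCMK⟩ := Finset.mem_filter.1 hM.1
  obtain ⟨L, hL⟩ := h.exists_isLeast_anc (h.nonempty hS) (h.subset hS) hK hKA
  obtain ⟨hLs, hSL, hLK⟩ := Finset.mem_filter.1 hL.1
  rw [edgeProj_eq_of_isLeast hL]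
  refine ⟨fun hLB => ⟨hSL.trans (hM.2 (Finset.mem_filter.2 ⟨hLs, hLB⟩)),
    h.not_ssubset_of_trace_eq hS hm hL hLB⟩, fun ⟨hSCM, hSCm⟩ => ?_⟩
  have hLCM : L ⊆ CM := hL.2 (Finset.mem_filter.2 ⟨hCMs, hSCM, hCMK ▸ hB⟩)
  have hLKB : L ∩ K ⊆ B := hCMK ▸ Finset.inter_subset_inter_right hLCM
  have hCmL : Cm ⊆ L := by
    obtain ⟨x, hx⟩ := hLK
    have hxCm : x ∈ Cm := Finset.mem_of_mem_inter_left (hCmK ▸ hLKB hx)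
    rcases h.subset_or_subset hLs hCms ⟨x, Finset.mem_inter.2 ⟨Finset.mem_of_mem_inter_left hx,
      hxCm⟩⟩ with hLCm | hCmL
    · have hSCm' : S = Cm := by
        by_contra hne
        exact hSCm (Finset.ssubset_iff_subset_ne.2 ⟨hSL.trans hLCm, hne⟩)
      exact hSCm' ▸ hSL
    · exact hCmL
  exact hLKB.antisymm (hCmK ▸ Finset.inter_subset_inter_right hCmL)

theorem IsLTree.filter_edgeProj_eq (h : IsLTree A s) (hK : K.Nonempty) (hKA : K ⊆ A)
    (hB : B.Nonempty) (hm : IsLeast (s.filter (· ∩ K = B) : Set (Finset ℕ)) Cm)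
    (hM : IsGreatest (s.filter (· ∩ K = B) : Set (Finset ℕ)) CM) :
    s.filter (edgeProj s K · = B) = s.filter (· ⊆ CM) \ (s.filter (· ⊆ Cm)).erase Cm := by
  ext S
  by_cases hS : S ∈ s
  · simp only [Finset.mem_filter, Finset.mem_sdiff, Finset.mem_erase, hS,
      h.edgeProj_eq_iff hK hKA hB hm hM hS, Finset.ssubset_iff_subset_ne]
    tauto
  · simp [hS]

theorem IsLTree.sum_fordWeight_filter_edgeProj_eq (α : ℝ) (h : IsLTree A s) (hK : K.Nonempty)
    (hKA : K ⊆ A) (hB : B.Nonempty) (hm : IsLeast (s.filter (· ∩ K = B) : Set (Finset ℕ)) Cm)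
    (hM : IsGreatest (s.filter (· ∩ K = B) : Set (Finset ℕ)) CM) :
    ∑ S ∈ s.filter (edgeProj s K · = B), fordWeight α S =
      CM.card - Cm.card + fordWeight α Cm := by
  have hCms : Cm ∈ s := (Finset.mem_filter.1 hm.1).1
  have hCMs : CM ∈ s := (Finset.mem_filter.1 hM.1).1
  have hCmCM : Cm ⊆ CM := hM.2 hm.1
  have hsub : (s.filter (· ⊆ Cm)).erase Cm ⊆ s.filter (· ⊆ CM) := fun S hS => by
    obtain ⟨hSs, hSCm⟩ := Finset.mem_filter.1 (Finset.mem_of_mem_erase hS)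
    exact Finset.mem_filter.2 ⟨hSs, hSCm.trans hCmCM⟩
  rw [h.filter_edgeProj_eq hK hKA hB hm hM, Finset.sum_sdiff_eq_sub hsub,
    Finset.sum_erase_eq_sub (Finset.mem_filter.2 ⟨hCms, subset_rfl⟩ : Cm ∈ s.filter (· ⊆ Cm)),
    (h.subtree hCMs).sum_fordWeight α (h.nonempty hCMs),
    (h.subtree hCms).sum_fordWeight α (h.nonempty hCms)]
  ring

theorem IsLTree.filter_piProjA_eq (h : IsLTree A s) (hK : K.Nonempty) (hKA : K ⊆ A)
    (hB : B.Nonempty) (hm : IsLeast (s.filter (· ∩ K = B) : Set (Finset ℕ)) Cm)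
    (hM : IsGreatest (s.filter (· ∩ K = B) : Set (Finset ℕ)) CM) :
    A.filter (piProjA s K · = B) = if 2 ≤ Cm.card then CM \ Cm else CM := by
  have hCMA : CM ⊆ A := h.subset (Finset.mem_filter.1 hM.1).1
  ext i
  by_cases hi : i ∈ A
  · rw [Finset.mem_filter, piProjA_eq_edgeProj,
      h.edgeProj_eq_iff hK hKA hB hm hM (h.singleton_mem hi), Finset.singleton_subset_iff,
      singleton_ssubset_iff_two_le_card]
    split_ifs <;> simp [*]
  · have hiCM : i ∉ CM := fun hiCM => hi (hCMA hiCM)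
    split_ifs <;> simp [hi, hiCM]

theorem IsLTree.two_le_card_iff (h : IsLTree A s) (hKA : K ⊆ A) (hB : B.Nonempty)
    (hm : IsLeast (s.filter (· ∩ K = B) : Set (Finset ℕ)) Cm) : 2 ≤ B.card ↔ 2 ≤ Cm.card := by
  obtain ⟨-, hCmK⟩ := Finset.mem_filter.1 hm.1
  refine ⟨fun hB2 => hB2.trans (Finset.card_le_card (hCmK ▸ Finset.inter_subset_left)),
    fun hCm2 => ?_⟩
  by_contra hB2
  obtain ⟨i, rfl⟩ := Finset.card_eq_one.1 (by have := hB.card_pos; omega : B.card = 1)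
  have hiK : i ∈ K := Finset.mem_of_mem_inter_right (hCmK ▸ Finset.mem_singleton_self i)
  have hCmi : Cm ⊆ {i} := hm.2 (Finset.mem_filter.2
    ⟨h.singleton_mem (hKA hiK), Finset.singleton_inter_of_mem hiK⟩)
  have := Finset.card_le_card hCmi
  rw [Finset.card_singleton] at this
  omega

theorem IsLTree.sum_fordWeight_filter_edgeProj (α : ℝ) (h : IsLTree A s) (hK : K.Nonempty)
    (hKA : K ⊆ A) (hB : B ∈ restrictT s K) :
    ∑ S ∈ s.filter (edgeProj s K · = B), fordWeight α S =
      if 2 ≤ B.card then ((A.filter (piProjA s K · = B)).card : ℝ) + α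
      else ((A.filter (piProjA s K · = B)).card : ℝ) - α := by
  obtain ⟨hB0, C, hC, hCB⟩ : B ≠ ∅ ∧ ∃ C ∈ s, C ∩ K = B := by
    simpa [restrictT] using hB
  obtain ⟨x, hx⟩ := Finset.nonempty_iff_ne_empty.2 hB0
  have hD : (s.filter (· ∩ K = B)).Nonempty := ⟨C, Finset.mem_filter.2 ⟨hC, hCB⟩⟩
  have hch := h.isChain (Finset.filter_subset (· ∩ K = B) s) (x := x) fun C hC =>
    Finset.mem_of_mem_inter_left ((Finset.mem_filter.1 hC).2 ▸ hx)
  obtain ⟨Cm, hm⟩ := exists_isLeast_of_isChain hD hch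
  obtain ⟨CM, hM⟩ := exists_isGreatest_of_isChain hD hch
  have hBne : B.Nonempty := ⟨x, hx⟩
  have hCmCM : Cm ⊆ CM := hM.2 hm.1
  rw [h.sum_fordWeight_filter_edgeProj_eq α hK hKA hBne hm hM,
    h.filter_piProjA_eq hK hKA hBne hm hM, fordWeight]
  by_cases hCm2 : 2 ≤ Cm.card
  · rw [if_pos hCm2, if_pos hCm2, if_pos ((h.two_le_card_iff hKA hBne hm).2 hCm2),
      Finset.card_sdiff_of_subset hCmCM, Nat.cast_sub (Finset.card_le_card hCmCM)]
  · have hCm1 : Cm.card = 1 := by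
      have := (h.nonempty (Finset.mem_filter.1 hm.1).1).card_pos
      omega
    rw [if_neg hCm2, if_neg hCm2, if_neg (mt (h.two_le_card_iff hKA hBne hm).1 hCm2), hCm1]
    push_cast
    ring

end Fiber

theorem sum_growStepF_mul (α : ℝ) {m : ℕ} {s : Finset (Finset ℕ)} (h : IsLTree (lbl m) s)
    (f : Finset (Finset ℕ) → ℝ) :
    ∑ t : LTree (lbl (m + 1)), growStepF α m s t.1 * f t.1 =
      ∑ S ∈ s, fordWeight α S / (∑ S' ∈ s, fordWeight α S') * f (insertLeaf s S (m + 1)) := by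
  simp only [growStepF, Finset.sum_mul]
  rw [Finset.sum_comm]
  refine Finset.sum_congr rfl fun S hS => ?_
  have hu : IsLTree (lbl (m + 1)) (insertLeaf s S (m + 1)) := by
    rw [lbl_succ]
    exact insertLeaf_isLTree h hS (by simp [lbl])
  -- `LTree` is a plain `def`, so instance search does not see the subtype behind it.
  let : Fintype { t // IsLTree (lbl (m + 1)) t } := fintypeLTree (lbl (m + 1))
  rw [Fintype.sum_eq_single ⟨_, hu⟩ fun t ht => by
    rw [if_neg fun h => ht (Subtype.ext h), zero_mul]]
  rw [if_pos rfl]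

theorem sum_growStepF_rhoDecoA_eq_upProb (α : ℝ) {m : ℕ} {K : Finset ℕ}
    {s : Finset (Finset ℕ)} (h : IsLTree (lbl m) s) (hK : K.Nonempty) (hKA : K ⊆ lbl m)
    (d' : DecoT) :
    ∑ t : LTree (lbl (m + 1)),
        growStepF α m s t.1 * (if rhoDecoA (m + 1) K t.1 = d' then 1 else 0) =
      upProb α m (rhoDecoA m K s) d' := by
  have hjK : m + 1 ∉ K := fun hj => by simpa [lbl] using hKA hj
  rw [sum_growStepF_mul α h fun u => if rhoDecoA (m + 1) K u = d' then 1 else 0,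
    h.sum_fordWeight α (hK.mono hKA),
    Finset.sum_congr rfl fun S hS => by rw [rhoDecoA_insertLeaf h hS hjK],
    ← Finset.sum_fiberwise_of_maps_to (t := restrictT s K)
      fun S hS => h.edgeProj_mem_restrictT (h.nonempty hS) (h.subset hS) hK hKA]
  refine Finset.sum_congr rfl fun B hB => ?_
  have hcard : (lbl m).card = m := by simp [lbl]
  rw [Finset.sum_congr rfl fun S hS => by rw [(Finset.mem_filter.1 hS).2], ← Finset.sum_mul,
    ← Finset.sum_div, h.sum_fordWeight_filter_edgeProj α hK hKA hB, hcard]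
  simp only [rhoDecoA, eq_comm (a := d')]
  congr

theorem sum_growStepF_rhoDecoA_div_eq_upProb (α : ℝ) {m : ℕ} {K : Finset ℕ}
    (hK : K.Nonempty) (hKA : K ⊆ lbl m) (q : LTree (lbl m) → ℝ) (d d' : DecoT)
    (hq : ∑ s : LTree (lbl m), q s * (if rhoDecoA m K s.1 = d then 1 else 0) ≠ 0) :
    (∑ s : LTree (lbl m), ∑ t : LTree (lbl (m + 1)),
        (q s * growStepF α m s.1 t.1) *
          (if rhoDecoA m K s.1 = d ∧ rhoDecoA (m + 1) K t.1 = d' then 1 else 0)) /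
      (∑ s : LTree (lbl m), q s * (if rhoDecoA m K s.1 = d then 1 else 0)) =
    upProb α m d d' := by
  have hstep : ∀ s : LTree (lbl m), ∑ t : LTree (lbl (m + 1)),
      (q s * growStepF α m s.1 t.1) *
        (if rhoDecoA m K s.1 = d ∧ rhoDecoA (m + 1) K t.1 = d' then 1 else 0) =
      (q s * (if rhoDecoA m K s.1 = d then 1 else 0)) * upProb α m d d' := by
    intro s
    by_cases hsd : rhoDecoA m K s.1 = d
    · simp only [hsd, true_and, if_true, mul_one, mul_assoc, ← Finset.mul_sum]
      rw [sum_growStepF_rhoDecoA_eq_upProb α s.2 hK hKA d', hsd]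
    · simp [hsd]
  simp only [hstep, ← Finset.sum_mul]
  exact mul_div_cancel_left₀ _ hq

theorem cor_insertion_unlabel_general (α : ℝ) (n k : ℕ)
    (hk1 : 1 ≤ k) (hkn : k ≤ n - 1)
    (d : DecoT)
    (hpos : 0 < ∑ s : LTree (lbl (n - 1)),
      qF α (n - 1) s * (if rhoDeco (n - 1) k s.1 = d then 1 else 0)) :
    ∀ d' : DecoT,
      (∑ s : LTree (lbl (n - 1)), ∑ t : LTree (lbl n),
          (qF α (n - 1) s * growStepF α (n - 1) s.1 t.1) *
            (if rhoDeco (n - 1) k s.1 = d ∧ rhoDeco n k t.1 = d' then 1 else 0)) /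
        (∑ s : LTree (lbl (n - 1)),
          qF α (n - 1) s * (if rhoDeco (n - 1) k s.1 = d then 1 else 0))
      = upProb α (n - 1) d d' := by
  intro d'
  obtain ⟨m, rfl⟩ : ∃ m, n = m + 1 := ⟨n - 1, by omega⟩
  exact sum_growStepF_rhoDecoA_div_eq_upProb α ⟨1, Finset.mem_Icc.2 ⟨le_rfl, hk1⟩⟩
    (Finset.Icc_subset_Icc_right (by omega)) (qF α m) d d' hpos.ne'

/-- **Corollary 4.10.** Under Ford's alpha growth, conditionally on
`ρ_k^{•(n-1)}(T_{n-1}) = 𝐭•`, the decorated tree `ρ_k^{•(n)}(T_n)` is obtained from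
`𝐭•` by an up-move: an edge is chosen with probability `(x_i - α)/(n-1-α)` (external)
or `(y_B + α)/(n-1-α)` (internal) and its mass is increased by one. -/
theorem cor_insertion_unlabel (α : ℝ) (hα0 : 0 ≤ α) (hα1 : α ≤ 1) (n k : ℕ)
    (hn : 2 ≤ n) (hk1 : 1 ≤ k) (hkn : k ≤ n - 1)
    (d : DecoT) (hd : IsDeco k (n - 1) d)
    (hpos : 0 < ∑ s : LTree (lbl (n - 1)),
      qF α (n - 1) s * (if rhoDeco (n - 1) k s.1 = d then 1 else 0)) :
    ∀ d' : DecoT,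
      (∑ s : LTree (lbl (n - 1)), ∑ t : LTree (lbl n),
          (qF α (n - 1) s * growStepF α (n - 1) s.1 t.1) *
            (if rhoDeco (n - 1) k s.1 = d ∧ rhoDeco n k t.1 = d' then 1 else 0)) /
        (∑ s : LTree (lbl (n - 1)),
          qF α (n - 1) s * (if rhoDeco (n - 1) k s.1 = d then 1 else 0))
      = upProb α (n - 1) d d' :=
  cor_insertion_unlabel_general α n k hk1 hkn d hpos
end

section
/- Let 𝕏 and 𝕐 be finite sets, P a stochastic matrix on 𝕏 with an invariant probability distribution q, and g : 𝕏 → 𝕐 a surjection with q(g^{−1}{y}) > 0 for all y ∈ 𝕐. Define the stochastic matrix Λ from 𝕐 to 𝕏 by Λ(y,x) := q(x)·1{g(x) = y}/q(g^{−1}{y}) and the stochastic matrix Q on 𝕐 by Q(y,y') := Σ_{x∈𝕏} Λ(y,x)·P(x, g^{−1}{y'}). Let (X_j)_{j≥0} be a Markov chain on 𝕏 with transition matrix P whose initial law ν satisfies: for every y ∈ 𝕐 with ν(g^{−1}{y}) > 0, the conditional law of X_0 given g(X_0) = y is Λ(y,·). Assume the intertwining relation ΛP = QΛ: Σ_{x}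 Λ(y,x)P(x,x') = Σ_{y'} Q(y,y')Λ(y',x') for all y ∈ 𝕐 and x' ∈ 𝕏. Then (g(X_j))_{j≥0} is a Markov chain with transition matrix Q (for every j ≥ 0 and all y₀,…,y_{j+1} ∈ 𝕐 with ℙ(g(X_0)=y₀,…,g(X_j)=y_j) > 0, ℙ(g(X_{j+1})=y_{j+1} ∣ g(X_0)=y₀,…,g(X_j)=y_j) = Q(y_j,y_{j+1})), and for every j ≥ 0 and all y₀,…,y_j with ℙ(g(X_0)=y₀,…,g(X_j)=y_j) > 0, the conditional law of X_j given g(X_0)=y₀,…,g(X_j)=y_j is Λ(y_j,·). -/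
/-!
Let `F_j(x') = ℙ(g(X₀) = y₀, …, g(X_j) = y_j, X_j = x')` and `S_j = ∑ F_j`. The forward equation
of the chain gives `F_{j+1}(x') = 1{g x' = y_{j+1}} ∑ₓ F_j(x) P(x,x')`. If `F_j = S_j Λ(y_j,·)`,
the intertwining `ΛP = QΛ` turns the sum into `S_j ∑_{y'} Q(y_j,y') Λ(y',x')`, and since `Λ(y',·)`
lives on the fibre `g⁻¹{y'}`, the indicator keeps only `y' = y_{j+1}`:
`F_{j+1} = S_j Q(y_j,y_{j+1}) Λ(y_{j+1},·)`. Summing over `x'` gives `S_{j+1} = S_j Q(y_j,y_{j+1})`.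
The assumption on the initial law starts the induction.
-/

open scoped Classical

open Finset

noncomputable section

variable {X Y : Type*}

section Fiber

variable [Fintype X] (μ : X → ℝ) (g : X → Y)

def fiberMass (y : Y) : ℝ :=
  ∑ x, μ x * if g x = y then 1 else 0

def fiberLaw (y : Y) (x : X) : ℝ :=
  μ x * (if g x = y then 1 else 0) / fiberMass μ g y

variable {μ g}

theorem fiberMass_nonneg (hμ : ∀ x, 0 ≤ μ x) (y : Y) : 0 ≤ fiberMass μ g y :=
  sum_nonneg fun x _ => mul_nonneg (hμ x) (by split_ifs <;> norm_num)

theorem sum_fiberLaw {y : Y} (hy : fiberMass μ g y ≠ 0) : ∑ x, fiberLaw μ g y x = 1 := by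
  simp only [fiberLaw]
  rw [← sum_div, ← fiberMass, div_self hy]

theorem fiberLaw_of_ne {y : Y} {x : X} (h : g x ≠ y) : fiberLaw μ g y x = 0 := by
  simp [fiberLaw, h]

-- `Λ y` is the law of `μ` conditioned on `g = y`, multiplied out so that empty fibres need no
-- special treatment.
theorem mul_ite_eq_fiberMass_mul (hμ : ∀ x, 0 ≤ μ x) {Λ : Y → X → ℝ}
    (hΛ : ∀ y, 0 < fiberMass μ g y → ∀ x, fiberLaw μ g y x = Λ y x) (y : Y) (x : X) :
    (μ x * if g x = y then 1 else 0) = fiberMass μ g y * Λ y x := by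
  rcases (fiberMass_nonneg hμ y).eq_or_lt with hzero | hpos
  · rw [← hzero, zero_mul]
    refine (sum_eq_zero_iff_of_nonneg fun x _ => ?_).1 hzero.symm x (mem_univ x)
    exact mul_nonneg (hμ x) (by split_ifs <;> norm_num)
  · rw [← hΛ y hpos x, fiberLaw, mul_div_cancel₀ _ hpos.ne']

end Fiber

theorem ite_mul_sum_mul_eq [Fintype Y] {g : X → Y} {Λ : Y → X → ℝ}
    (hΛg : ∀ y x, g x ≠ y → Λ y x = 0) (c : Y → ℝ) (y : Y) (x : X) :
    ((if g x = y then 1 else 0) * ∑ y', c y' * Λ y' x) = c y * Λ y x := by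
  split_ifs with hx
  · rw [one_mul, sum_eq_single y fun y' _ hy' => by rw [hΛg y' x (by rwa [hx, ne_comm]), mul_zero]]
    simp
  · rw [zero_mul, hΛg y x hx, mul_zero]

def pathWeight (ν : X → ℝ) (P : X → X → ℝ) (j : ℕ) (x : Fin (j + 1) → X) : ℝ :=
  ν (x 0) * ∏ l : Fin j, P (x l.castSucc) (x l.succ)

theorem pathWeight_snoc (ν : X → ℝ) (P : X → X → ℝ) (j : ℕ) (x : Fin (j + 1) → X) (a : X) :
    pathWeight ν P (j + 1) (Fin.snoc x a) = pathWeight ν P j x * P (x (Fin.last j)) a := by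
  simp only [pathWeight, Fin.prod_univ_castSucc, Fin.snoc_castSucc, Fin.succ_castSucc,
    Fin.succ_last, Fin.snoc_last]
  rw [← Fin.castSucc_zero, Fin.snoc_castSucc, mul_assoc]

theorem Fin.sum_pi_succ_eq_sum_snoc [Fintype X] {M : Type*} [AddCommMonoid M] (n : ℕ)
    (f : (Fin (n + 1) → X) → M) :
    ∑ x : Fin (n + 1) → X, f x = ∑ a : X, ∑ x : Fin n → X, f (Fin.snoc x a) := by
  rw [← (Fin.snocEquiv fun _ => X).sum_comp, Fintype.sum_prod_type]
  rfl

section Lumping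

variable [Fintype X] (ν : X → ℝ) (P : X → X → ℝ) (g : X → Y) (ys : ℕ → Y)

/-- `ℙ(g(X₀) = ys 0, …, g(X_j) = ys j)` for the chain with initial law `ν` and kernel `P`. -/
def lumpedPathMass (j : ℕ) : ℝ :=
  ∑ x : Fin (j + 1) → X, pathWeight ν P j x *
    if ∀ l : Fin (j + 1), g (x l) = ys l then 1 else 0

/-- `ℙ(g(X₀) = ys 0, …, g(X_j) = ys j, X_j = x')`. -/
def lumpedPathMassAt (j : ℕ) (x' : X) : ℝ :=
  ∑ x : Fin (j + 1) → X, pathWeight ν P j x *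
    if (∀ l : Fin (j + 1), g (x l) = ys l) ∧ x (Fin.last j) = x' then 1 else 0

theorem lumpedPathMass_eq_sum (j : ℕ) :
    lumpedPathMass ν P g ys j = ∑ x', lumpedPathMassAt ν P g ys j x' := by
  simp only [lumpedPathMassAt, lumpedPathMass, ite_and, mul_ite, mul_one, mul_zero]
  rw [sum_comm]
  refine sum_congr rfl fun x _ => ?_
  split_ifs <;> simp

theorem lumpedPathMassAt_zero (x' : X) :
    lumpedPathMassAt ν P g ys 0 x' = ν x' * if g x' = ys 0 then 1 else 0 := by
  rw [lumpedPathMassAt, ← (Equiv.funUnique (Fin 1) X).symm.sum_comp, sum_eq_single x']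
  · simp [pathWeight]
  · intro a _ ha
    simp [ha]
  · simp

theorem lumpedPathMassAt_succ (j : ℕ) (x' : X) :
    lumpedPathMassAt ν P g ys (j + 1) x' = (if g x' = ys (j + 1) then 1 else 0) *
      ∑ x'', lumpedPathMassAt ν P g ys j x'' * P x'' x' := by
  simp only [lumpedPathMassAt, sum_mul]
  rw [Fin.sum_pi_succ_eq_sum_snoc, sum_eq_single x', sum_comm, mul_sum]
  · refine sum_congr rfl fun x _ => ?_
    simp only [pathWeight_snoc, Fin.forall_fin_succ' (n := j + 1), Fin.snoc_castSucc,
      Fin.snoc_last, Fin.val_castSucc, Fin.val_last]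
    rw [sum_eq_single (x (Fin.last j))]
    · split_ifs <;> simp_all
    · intro b _ hb
      simp [Ne.symm hb]
    · simp
  · intro a _ ha
    refine sum_eq_zero fun x _ => ?_
    simp [Fin.snoc_last, ha]
  · simp

end Lumping

section Intertwining

variable [Fintype X] {ν : X → ℝ} {P : X → X → ℝ} {g : X → Y} {Λ : Y → X → ℝ}
  {Q : Y → Y → ℝ} (ys : ℕ → Y)

theorem lumpedPathMass_eq_of_lumpedPathMassAt_eq (hΛ1 : ∀ y, ∑ x, Λ y x = 1) {j : ℕ} {c : ℝ}
    (h : ∀ x', lumpedPathMassAt ν P g ys j x' = c * Λ (ys j) x') :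
    lumpedPathMass ν P g ys j = c := by
  rw [lumpedPathMass_eq_sum, sum_congr rfl fun x' _ => h x', ← mul_sum, hΛ1, mul_one]

variable [Fintype Y]

theorem lumpedPathMassAt_succ_eq_of_intertwining (hΛg : ∀ y x, g x ≠ y → Λ y x = 0)
    (hint : ∀ y x', ∑ x, Λ y x * P x x' = ∑ y', Q y y' * Λ y' x') {j : ℕ} {c : ℝ}
    (h : ∀ x', lumpedPathMassAt ν P g ys j x' = c * Λ (ys j) x') (x' : X) :
    lumpedPathMassAt ν P g ys (j + 1) x' = c * Q (ys j) (ys (j + 1)) * Λ (ys (j + 1)) x' := by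
  simp only [lumpedPathMassAt_succ, h, mul_assoc, ← mul_sum, hint]
  rw [mul_left_comm, ite_mul_sum_mul_eq hΛg]

theorem lumpedPathMassAt_eq_of_intertwining (hΛ1 : ∀ y, ∑ x, Λ y x = 1)
    (hΛg : ∀ y x, g x ≠ y → Λ y x = 0)
    (hint : ∀ y x', ∑ x, Λ y x * P x x' = ∑ y', Q y y' * Λ y' x')
    (hν : ∀ y x, (ν x * if g x = y then 1 else 0) = fiberMass ν g y * Λ y x) (j : ℕ) (x' : X) :
    lumpedPathMassAt ν P g ys j x' = lumpedPathMass ν P g ys j * Λ (ys j) x' := by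
  induction j generalizing x' with
  | zero =>
    have h0 : ∀ x', lumpedPathMassAt ν P g ys 0 x' = fiberMass ν g (ys 0) * Λ (ys 0) x' :=
      fun x' => (lumpedPathMassAt_zero ν P g ys x').trans (hν (ys 0) x')
    rw [h0, lumpedPathMass_eq_of_lumpedPathMassAt_eq ys hΛ1 h0]
  | succ j ih =>
    have hsucc := lumpedPathMassAt_succ_eq_of_intertwining ys hΛg hint ih
    rw [hsucc, lumpedPathMass_eq_of_lumpedPathMassAt_eq ys hΛ1 hsucc]

theorem lumpedPathMass_succ_of_intertwining (hΛ1 : ∀ y, ∑ x, Λ y x = 1)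
    (hΛg : ∀ y x, g x ≠ y → Λ y x = 0)
    (hint : ∀ y x', ∑ x, Λ y x * P x x' = ∑ y', Q y y' * Λ y' x')
    (hν : ∀ y x, (ν x * if g x = y then 1 else 0) = fiberMass ν g y * Λ y x) (j : ℕ) :
    lumpedPathMass ν P g ys (j + 1) = lumpedPathMass ν P g ys j * Q (ys j) (ys (j + 1)) :=
  lumpedPathMass_eq_of_lumpedPathMassAt_eq ys hΛ1 <| lumpedPathMassAt_succ_eq_of_intertwining ys
    hΛg hint (lumpedPathMassAt_eq_of_intertwining ys hΛ1 hΛg hint hν j)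

end Intertwining

end

theorem rogers_pitman_intertwining_general {X Y : Type*} [Fintype X] [Fintype Y]
    (P : X → X → ℝ) (q : X → ℝ) (g : X → Y)
    (hgq : ∀ y : Y, 0 < ∑ x, q x * (if g x = y then 1 else 0))
    (Λ : Y → X → ℝ)
    (hΛ : ∀ y x, Λ y x =
      q x * (if g x = y then 1 else 0) / (∑ x', q x' * (if g x' = y then 1 else 0)))
    (Q : Y → Y → ℝ)
    (ν : X → ℝ) (hν0 : ∀ x, 0 ≤ ν x)
    (hν : ∀ y : Y, 0 < (∑ x, ν x * (if g x = y then 1 else 0)) →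
      ∀ x : X, ν x * (if g x = y then 1 else 0) /
          (∑ x', ν x' * (if g x' = y then 1 else 0)) = Λ y x)
    (hint : ∀ (y : Y) (x' : X),
      (∑ x, Λ y x * P x x') = ∑ y' : Y, Q y y' * Λ y' x') :
    (∀ (j : ℕ) (ys : ℕ → Y),
      0 < (∑ x : Fin (j + 1) → X,
            (ν (x ⟨0, Nat.succ_pos j⟩) * ∏ l : Fin j, P (x l.castSucc) (x l.succ)) *
              (if ∀ l : Fin (j + 1), g (x l) = ys l.1 then 1 else 0)) →
      (∑ x : Fin (j + 2) → X,
            (ν (x ⟨0, Nat.succ_pos (j + 1)⟩) *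
                ∏ l : Fin (j + 1), P (x l.castSucc) (x l.succ)) *
              (if ∀ l : Fin (j + 2), g (x l) = ys l.1 then 1 else 0)) /
        (∑ x : Fin (j + 1) → X,
            (ν (x ⟨0, Nat.succ_pos j⟩) * ∏ l : Fin j, P (x l.castSucc) (x l.succ)) *
              (if ∀ l : Fin (j + 1), g (x l) = ys l.1 then 1 else 0))
      = Q (ys j) (ys (j + 1))) ∧
    (∀ (j : ℕ) (ys : ℕ → Y),
      0 < (∑ x : Fin (j + 1) → X,
            (ν (x ⟨0, Nat.succ_pos j⟩) * ∏ l : Fin j, P (x l.castSucc) (x l.succ)) *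
              (if ∀ l : Fin (j + 1), g (x l) = ys l.1 then 1 else 0)) →
      ∀ x' : X,
        (∑ x : Fin (j + 1) → X,
            (ν (x ⟨0, Nat.succ_pos j⟩) * ∏ l : Fin j, P (x l.castSucc) (x l.succ)) *
              (if (∀ l : Fin (j + 1), g (x l) = ys l.1) ∧ x ⟨j, Nat.lt_succ_self j⟩ = x'
                then 1 else 0)) /
          (∑ x : Fin (j + 1) → X,
            (ν (x ⟨0, Nat.succ_pos j⟩) * ∏ l : Fin j, P (x l.castSucc) (x l.succ)) *
              (if ∀ l : Fin (j + 1), g (x l) = ys l.1 then 1 else 0))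
        = Λ (ys j) x') := by
  have hΛ1 : ∀ y, ∑ x, Λ y x = 1 := fun y => by
    simp only [hΛ]
    exact sum_fiberLaw (hgq y).ne'
  have hΛg : ∀ y x, g x ≠ y → Λ y x = 0 := fun y x h => (hΛ y x).trans (fiberLaw_of_ne h)
  have hνΛ := mul_ite_eq_fiberMass_mul hν0 hν
  refine ⟨fun j ys (hpos : 0 < lumpedPathMass ν P g ys j) => ?_,
    fun j ys (hpos : 0 < lumpedPathMass ν P g ys j) x' => ?_⟩
  · change lumpedPathMass ν P g ys (j + 1) / lumpedPathMass ν P g ys j = _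
    rw [lumpedPathMass_succ_of_intertwining ys hΛ1 hΛg hint hνΛ, mul_div_cancel_left₀ _ hpos.ne']
  · change lumpedPathMassAt ν P g ys j x' / lumpedPathMass ν P g ys j = _
    rw [lumpedPathMassAt_eq_of_intertwining ys hΛ1 hΛg hint hνΛ,
      mul_div_cancel_left₀ _ hpos.ne']

/-- **Lemma 5.4 (Rogers–Pitman intertwining).** Let `P` be a stochastic matrix on a
finite set `𝕏` with invariant probability `q`, `g : 𝕏 → 𝕐` a surjection with
positive fiber masses, `Λ(y,·) = q(· | g = y)`, `Q = Λ P g`, and let `(X_j)` be a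
`P`-chain whose initial law `ν` has conditional law `Λ(y,·)` given `g(X_0) = y`.
If `Λ P = Q Λ`, then `(g(X_j))_{j≥0}` is Markov with transition matrix `Q`, and the
conditional law of `X_j` given `g(X_0) = y₀, …, g(X_j) = y_j` is `Λ(y_j, ·)`. -/
theorem rogers_pitman_intertwining {X Y : Type*} [Fintype X] [Fintype Y]
    (P : X → X → ℝ) (hP0 : ∀ x x', 0 ≤ P x x') (hP1 : ∀ x, ∑ x', P x x' = 1)
    (q : X → ℝ) (hq0 : ∀ x, 0 ≤ q x) (hq1 : ∑ x, q x = 1)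
    (hqinv : ∀ x' : X, ∑ x, q x * P x x' = q x')
    (g : X → Y) (hg : Function.Surjective g)
    (hgq : ∀ y : Y, 0 < ∑ x, q x * (if g x = y then 1 else 0))
    (Λ : Y → X → ℝ)
    (hΛ : ∀ y x, Λ y x =
      q x * (if g x = y then 1 else 0) / (∑ x', q x' * (if g x' = y then 1 else 0)))
    (Q : Y → Y → ℝ)
    (hQ : ∀ y y', Q y y' =
      ∑ x, Λ y x * (∑ x', P x x' * (if g x' = y' then 1 else 0)))
    (ν : X → ℝ) (hν0 : ∀ x, 0 ≤ ν x) (hν1 : ∑ x, ν x = 1)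
    (hν : ∀ y : Y, 0 < (∑ x, ν x * (if g x = y then 1 else 0)) →
      ∀ x : X, ν x * (if g x = y then 1 else 0) /
          (∑ x', ν x' * (if g x' = y then 1 else 0)) = Λ y x)
    (hint : ∀ (y : Y) (x' : X),
      (∑ x, Λ y x * P x x') = ∑ y' : Y, Q y y' * Λ y' x') :
    (∀ (j : ℕ) (ys : ℕ → Y),
      0 < (∑ x : Fin (j + 1) → X,
            (ν (x ⟨0, Nat.succ_pos j⟩) * ∏ l : Fin j, P (x l.castSucc) (x l.succ)) *
              (if ∀ l : Fin (j + 1), g (x l) = ys l.1 then 1 else 0)) →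
      (∑ x : Fin (j + 2) → X,
            (ν (x ⟨0, Nat.succ_pos (j + 1)⟩) *
                ∏ l : Fin (j + 1), P (x l.castSucc) (x l.succ)) *
              (if ∀ l : Fin (j + 2), g (x l) = ys l.1 then 1 else 0)) /
        (∑ x : Fin (j + 1) → X,
            (ν (x ⟨0, Nat.succ_pos j⟩) * ∏ l : Fin j, P (x l.castSucc) (x l.succ)) *
              (if ∀ l : Fin (j + 1), g (x l) = ys l.1 then 1 else 0))
      = Q (ys j) (ys (j + 1))) ∧
    (∀ (j : ℕ) (ys : ℕ → Y),
      0 < (∑ x : Fin (j + 1) → X,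
            (ν (x ⟨0, Nat.succ_pos j⟩) * ∏ l : Fin j, P (x l.castSucc) (x l.succ)) *
              (if ∀ l : Fin (j + 1), g (x l) = ys l.1 then 1 else 0)) →
      ∀ x' : X,
        (∑ x : Fin (j + 1) → X,
            (ν (x ⟨0, Nat.succ_pos j⟩) * ∏ l : Fin j, P (x l.castSucc) (x l.succ)) *
              (if (∀ l : Fin (j + 1), g (x l) = ys l.1) ∧ x ⟨j, Nat.lt_succ_self j⟩ = x'
                then 1 else 0)) /
          (∑ x : Fin (j + 1) → X,
            (ν (x ⟨0, Nat.succ_pos j⟩) * ∏ l : Fin j, P (x l.castSucc) (x l.succ)) *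
              (if ∀ l : Fin (j + 1), g (x l) = ys l.1 then 1 else 0))
        = Λ (ys j) x') :=
  rogers_pitman_intertwining_general P q g hgq Λ hΛ Q ν hν0 hν hint
end
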